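/- arXiv:2405.11424 — 12 statements merged into one kernel-verified Lean document; each statement's English description precedes it below -/
import Mathlib

section
/- Let X be a finite nonempty set and let R be a subset of the power set 2^X that resolves the metric space (2^X, Jac). Then R separates the distinct elements of X: for all x₁, x₂ ∈ X with x₁ ≠ x₂, there exists r ∈ R such that either x₁ ∈ r and x₂ ∉ r, or x₁ ∉ r and x₂ ∈ r. -/
/-- The Jaccard distance between two finite sets: `|a Δ b| / |a ∪ b|`
(with the convention `0/0 = 0`, so `jac a a = 0`). -/
noncomputable def jac {α : Type*} [DecidableEq α] (a b : Finset α) : ℝ :=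
  (((a \ b) ∪ (b \ a)).card : ℝ) / ((a ∪ b).card : ℝ)

lemma jac_singleton_mem {α : Type*} [DecidableEq α] {x : α} {r : Finset α}
    (h : x ∈ r) : jac {x} r = ((r.card : ℝ) - 1) / r.card := by
  have h1 : ({x} : Finset α) \ r = ∅ := by
    simp [Finset.sdiff_eq_empty_iff_subset, Finset.singleton_subset_iff, h]
  have h2 : ({x} : Finset α) ∪ r = r := by
    simp [Finset.union_eq_right, h]
  have h3 : (r \ {x}).card = r.card - 1 := by
    rw [Finset.card_sdiff_of_subset (by simpa using h)]
    simp
  have hpos : 1 ≤ r.card := Finset.card_pos.mpr ⟨x, h⟩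
  rw [jac, h1, h2, Finset.empty_union, h3, Nat.cast_sub hpos, Nat.cast_one]

lemma jac_singleton_notMem {α : Type*} [DecidableEq α] {x : α} {r : Finset α}
    (h : x ∉ r) : jac {x} r = 1 := by
  have h1 : ({x} : Finset α) \ r = {x} := by
    simp [Finset.sdiff_eq_self_iff_disjoint, Finset.disjoint_singleton_left, h]
  have h2 : r \ {x} = r := by
    simp [Finset.sdiff_eq_self_iff_disjoint, Finset.disjoint_singleton_right, h]
  have h3 : ({x} ∪ r : Finset α).card = r.card + 1 := by
    rw [Finset.card_union_of_disjoint (by simpa [Finset.disjoint_singleton_left] using h)]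
    simp; ring
  rw [jac, h1, h2, h3]
  rw [div_self]
  positivity

/-- If `R` resolves `(2^X, Jac)` then `R` separates the distinct elements of `X`. -/
theorem stmt0 {α : Type*} [Fintype α] [DecidableEq α] [Nonempty α]
    (R : Set (Finset α))
    (hR : ∀ a b : Finset α, a ≠ b → ∃ r ∈ R, jac a r ≠ jac b r)
    (x₁ x₂ : α) (hx : x₁ ≠ x₂) :
    ∃ r ∈ R, (x₁ ∈ r ∧ x₂ ∉ r) ∨ (x₁ ∉ r ∧ x₂ ∈ r) := by
  obtain ⟨r, hrR, hne⟩ := hR {x₁} {x₂} (by simpa using hx)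
  refine ⟨r, hrR, ?_⟩
  by_contra h
  push_neg at h
  obtain ⟨h1, h2⟩ := h
  apply hne
  by_cases hm : x₁ ∈ r
  · have hm2 : x₂ ∈ r := h1 hm
    rw [jac_singleton_mem hm, jac_singleton_mem hm2]
  · have hm2 : x₂ ∉ r := h2 hm
    rw [jac_singleton_notMem hm, jac_singleton_notMem hm2]
end

section
/- Let X be a finite nonempty set and let R be a subset of 2^X that resolves (2^X, Jac). If ∅ ∉ R, then R covers X, i.e., the union of all sets in R equals X. -/
/-- If `R` resolves `(2^X, Jac)` and `∅ ∉ R`, then `R` covers `X`. -/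
theorem stmt1 {α : Type*} [Fintype α] [DecidableEq α] [Nonempty α]
    (R : Set (Finset α))
    (hR : ∀ a b : Finset α, a ≠ b → ∃ r ∈ R, jac a r ≠ jac b r)
    (hempty : (∅ : Finset α) ∉ R) :
    (⋃ r ∈ R, (r : Set α)) = Set.univ := by
  by_contra h
  obtain ⟨x, hx⟩ : ∃ x : α, ∀ r ∈ R, x ∉ r := by
    rcases Set.ne_univ_iff_exists_notMem _ |>.mp h with ⟨x, hx⟩
    simp only [Set.mem_iUnion, not_exists, Finset.mem_coe] at hx
    exact ⟨x, hx⟩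
  obtain ⟨r, hrR, hne⟩ := hR ∅ {x} (Finset.singleton_ne_empty x).symm
  have hxr : x ∉ r := hx r hrR
  have hr0 : r ≠ ∅ := fun h' => hempty (h' ▸ hrR)
  have hcard : (0 : ℝ) < r.card := by
    exact_mod_cast Finset.card_pos.mpr (Finset.nonempty_iff_ne_empty.mpr hr0)
  apply hne
  have h1 : jac ∅ r = 1 := by
    unfold jac
    simp only [Finset.empty_sdiff, Finset.sdiff_empty, Finset.empty_union]
    field_simp
  have h2 : jac {x} r = 1 := by
    unfold jac
    have hd : {x} \ r = {x} := by
      simp [Finset.sdiff_eq_self_iff_disjoint, Finset.disjoint_singleton_left, hxr]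
    have hd2 : r \ {x} = r := by
      simp [Finset.sdiff_eq_self_iff_disjoint, Finset.disjoint_singleton_right, hxr]
    rw [hd, hd2]
    have hu : ({x} ∪ r : Finset α).card = r.card + 1 := by
      rw [Finset.card_union_of_disjoint (by simp [Finset.disjoint_singleton_left, hxr])]
      rw [Finset.card_singleton]; omega
    rw [hu]
    field_simp
  rw [h1, h2]
end

section
/- Let X be a finite nonempty set and let R be a subset of 2^X that resolves (2^X, Jac). Then at most one element of X is not covered by R; i.e., |X \ (⋃_{r∈R} r)| ≤ 1. -/
/-- If `R` resolves `(2^X, Jac)` then at most one element of `X` is not covered by `R`. -/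
theorem stmt2 {α : Type*} [Fintype α] [DecidableEq α] [Nonempty α]
    (R : Set (Finset α))
    (hR : ∀ a b : Finset α, a ≠ b → ∃ r ∈ R, jac a r ≠ jac b r) :
    (Set.univ \ ⋃ r ∈ R, (r : Set α)).ncard ≤ 1 := by
  have key : ∀ (x : α) (r : Finset α), x ∉ r → jac {x} r = 1 := by
    intro x r hx
    have h1 : ({x} : Finset α) \ r = {x} := by
      rw [Finset.sdiff_eq_self_iff_disjoint]; simpa using hx
    have h2 : r \ {x} = r := by
      rw [Finset.sdiff_eq_self_iff_disjoint]; simpa using hx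
    have h3 : (({x} : Finset α) ∪ r).card ≠ 0 :=
      Finset.card_ne_zero_of_mem (Finset.mem_union_left r (Finset.mem_singleton_self x))
    rw [jac, h1, h2, div_self]
    exact_mod_cast h3
  rw [Set.ncard_le_one_iff_eq]
  by_contra h
  push_neg at h
  obtain ⟨hne, hnot⟩ := h
  obtain ⟨x, hx⟩ := hne
  have : ∃ y ∈ (Set.univ \ ⋃ r ∈ R, (r : Set α)), y ≠ x := by
    by_contra hy
    push_neg at hy
    exact hnot x (Set.eq_singleton_iff_unique_mem.mpr ⟨hx, hy⟩)
  obtain ⟨y, hy, hyx⟩ := this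
  have hxout : ∀ r ∈ R, x ∉ r := by
    intro r hr hxr
    exact hx.2 (Set.mem_biUnion hr hxr)
  have hyout : ∀ r ∈ R, y ∉ r := by
    intro r hr hyr
    exact hy.2 (Set.mem_biUnion hr hyr)
  obtain ⟨r, hr, hjac⟩ := hR {x} {y} (by simpa using (hyx.symm))
  exact hjac (by rw [key x r (hxout r hr), key y r (hyout r hr)])
end

section
/- Let X be a finite set with |X| ≥ 2 and let R be a subset of 2^X that resolves (2^X, Jac). Then |R| ≥ ln(C(|X|, ⌊|X|/2⌋)) / ln(|X|/2 + 1), where C(n,k) denotes the binomial coefficient. -/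
lemma symmdiff_card {α : Type*} [DecidableEq α] (a r : Finset α) :
    ((a \ r) ∪ (r \ a)).card + 2 * (a ∩ r).card = a.card + r.card := by
  rw [Finset.card_union_of_disjoint disjoint_sdiff_sdiff]
  have h1 := Finset.card_sdiff_add_card_inter a r
  have h2 := Finset.card_sdiff_add_card_inter r a
  rw [Finset.inter_comm r a] at h2
  omega

lemma jac_depends {α : Type*} [DecidableEq α] (a b r : Finset α)
    (hc : a.card = b.card) (hi : (a ∩ r).card = (b ∩ r).card) :
    jac a r = jac b r := by
  have hs1 := symmdiff_card a r
  have hs2 := symmdiff_card b r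
  have hu1 := Finset.card_union_add_card_inter a r
  have hu2 := Finset.card_union_add_card_inter b r
  have hnum : ((a \ r) ∪ (r \ a)).card = ((b \ r) ∪ (r \ b)).card := by omega
  have hden : (a ∪ r).card = (b ∪ r).card := by omega
  unfold jac
  rw [hnum, hden]

/-- Lower bound for resolving sets of `(2^X, Jac)`:
`|R| ≥ ln(C(|X|, ⌊|X|/2⌋)) / ln(|X|/2 + 1)`. -/
theorem stmt4 {α : Type*} [Fintype α] [DecidableEq α]
    (h2 : 2 ≤ Fintype.card α)
    (R : Finset (Finset α))
    (hR : ∀ a b : Finset α, a ≠ b → ∃ r ∈ R, jac a r ≠ jac b r) :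
    Real.log (Nat.choose (Fintype.card α) (Fintype.card α / 2)) /
        Real.log ((Fintype.card α : ℝ) / 2 + 1) ≤ (R.card : ℝ) := by
  set n := Fintype.card α with hn
  set k := n / 2 with hk
  -- injectivity of the intersection-size fingerprint on k-subsets
  have hinj : Function.Injective
      (fun a : {s : Finset α // s.card = k} =>
        (fun r : {x // x ∈ R} => (⟨(a.1 ∩ r.1).card, by
          have h := Finset.card_le_card (Finset.inter_subset_left (s₁ := a.1) (s₂ := r.1))
          have := a.2
          omega⟩ : Fin (k+1)))) := by
    intro a b hab
    apply Subtype.ext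
    by_contra hne
    obtain ⟨r, hrR, hjac⟩ := hR a.1 b.1 hne
    apply hjac
    apply jac_depends
    · rw [a.2, b.2]
    · have := congrFun hab ⟨r, hrR⟩
      simpa using this
  have hcard : n.choose k ≤ (k+1) ^ R.card := by
    have := Fintype.card_le_of_injective _ hinj
    simpa [Fintype.card_finset_len] using this
  have hkr : (k : ℝ) + 1 ≤ (n : ℝ) / 2 + 1 := by
    have h2k : 2 * k ≤ n := by omega
    have : (2 : ℝ) * k ≤ n := by exact_mod_cast h2k
    linarith
  have hlogpos : 0 < Real.log ((n : ℝ) / 2 + 1) := by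
    apply Real.log_pos
    have : (2 : ℝ) ≤ n := by exact_mod_cast h2
    linarith
  rw [div_le_iff₀ hlogpos]
  have hchoosepos : 0 < n.choose k := Nat.choose_pos (Nat.div_le_self n 2)
  calc Real.log (n.choose k)
      ≤ Real.log (((k+1) ^ R.card : ℕ) : ℝ) := by
        apply Real.log_le_log (by exact_mod_cast hchoosepos)
        exact_mod_cast hcard
    _ = R.card * Real.log ((k : ℝ) + 1) := by
        push_cast
        rw [Real.log_pow]
    _ ≤ R.card * Real.log ((n : ℝ) / 2 + 1) := by
        apply mul_le_mul_of_nonneg_left _ (by positivity)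
        apply Real.log_le_log (by positivity) hkr
end

section
/- For every ε with 0 < ε < 1 there exists N such that for all n ≥ N: every subset R of the power set of Fin n that resolves (2^{Fin n}, Jac) satisfies |R| ≥ (1−ε)·(ln 2)·n/ln n. -/
lemma jac_eq_of_cards {n : ℕ} (a b r : Finset (Fin n))
    (h1 : a.card = b.card) (h2 : (a \ r).card = (b \ r).card) :
    jac a r = jac b r := by
  have ha1 : (a \ r).card + r.card = (a ∪ r).card := Finset.card_sdiff_add_card a r
  have hb1 : (b \ r).card + r.card = (b ∪ r).card := Finset.card_sdiff_add_card b r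
  have ha2 : (r \ a).card + a.card = (a ∪ r).card := by
    rw [Finset.union_comm]; exact Finset.card_sdiff_add_card r a
  have hb2 : (r \ b).card + b.card = (b ∪ r).card := by
    rw [Finset.union_comm]; exact Finset.card_sdiff_add_card r b
  have hu : (a ∪ r).card = (b ∪ r).card := by omega
  have hra : (r \ a).card = (r \ b).card := by omega
  have hsa : ((a \ r) ∪ (r \ a)).card = (a \ r).card + (r \ a).card :=
    Finset.card_union_of_disjoint (disjoint_sdiff_sdiff)
  have hsb : ((b \ r) ∪ (r \ b)).card = (b \ r).card + (r \ b).card :=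
    Finset.card_union_of_disjoint (disjoint_sdiff_sdiff)
  unfold jac
  rw [hsa, hsb, hu, h2, hra]

lemma count_bound (n : ℕ) (R : Finset (Finset (Fin n)))
    (hres : ∀ a b : Finset (Fin n), a ≠ b → ∃ r ∈ R, jac a r ≠ jac b r) :
    2 ^ n ≤ (n + 1) ^ (R.card + 1) := by
  have hcard : ∀ (a : Finset (Fin n)), a.card < n + 1 := by
    intro a
    have := Finset.card_le_card (Finset.subset_univ a)
    simp at this
    omega
  have hcard2 : ∀ (a r : Finset (Fin n)), (a \ r).card < n + 1 := fun a r => hcard _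
  classical
  let f : Finset (Fin n) → Fin (n + 1) × ({x // x ∈ R} → Fin (n + 1)) :=
    fun a => (⟨a.card, hcard a⟩, fun r => ⟨(a \ r.1).card, hcard2 a r.1⟩)
  have hinj : Function.Injective f := by
    intro a b hab
    by_contra hne
    obtain ⟨r, hrR, hjac⟩ := hres a b hne
    apply hjac
    have h1 : a.card = b.card := by
      have := congrArg (fun p => (p.1 : ℕ)) hab
      simpa [f] using this
    have h2 : (a \ r).card = (b \ r).card := by
      have := congrArg (fun p => ((p.2 ⟨r, hrR⟩ : Fin (n + 1)) : ℕ)) hab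
      simpa [f] using this
    exact jac_eq_of_cards a b r h1 h2
  have := Fintype.card_le_of_injective f hinj
  simp [Fintype.card_finset, Fintype.card_fin, Fintype.card_coe] at this
  calc 2 ^ n ≤ (n + 1) * (n + 1) ^ R.card := this
    _ = (n + 1) ^ (R.card + 1) := by ring

/-- Asymptotic lower bound: every resolving set of `(2^{Fin n}, Jac)` has size at least
`(1 - ε)(ln 2) n / ln n`, for all large `n`. -/
theorem stmt5 (ε : ℝ) (hε0 : 0 < ε) (hε1 : ε < 1) :
    ∃ N : ℕ, ∀ n : ℕ, N ≤ n →
      ∀ R : Finset (Finset (Fin n)),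
        (∀ a b : Finset (Fin n), a ≠ b → ∃ r ∈ R, jac a r ≠ jac b r) →
        (1 - ε) * Real.log 2 * (n : ℝ) / Real.log (n : ℝ) ≤ (R.card : ℝ) := by
  have hℓ2 : 0 < Real.log 2 := Real.log_pos (by norm_num)
  -- eventually facts
  have hA : ∀ᶠ (n : ℕ) in Filter.atTop, 1 ≤ (ε / 2) * Real.log n := by
    have ht : Filter.Tendsto (fun n : ℕ => (ε / 2) * Real.log n) Filter.atTop Filter.atTop :=
      (Real.tendsto_log_atTop.comp tendsto_natCast_atTop_atTop).const_mul_atTop (by linarith)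
    exact ht.eventually_ge_atTop 1
  have hB : ∀ᶠ (n : ℕ) in Filter.atTop, Real.log n ≤ (ε * Real.log 2 / 3) * n := by
    have hc : (0 : ℝ) < ε * Real.log 2 / 3 := by positivity
    have h := Real.isLittleO_log_id_atTop.def hc
    have h2 := tendsto_natCast_atTop_atTop.eventually h
    filter_upwards [h2] with n hn
    have : Real.log n ≤ ‖Real.log n‖ := le_abs_self _
    calc Real.log n ≤ ‖Real.log (n : ℝ)‖ := this
      _ ≤ ε * Real.log 2 / 3 * ‖id (n : ℝ)‖ := hn
      _ = ε * Real.log 2 / 3 * n := by simp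
  have hC : ∀ᶠ (n : ℕ) in Filter.atTop, 2 ≤ n := Filter.eventually_ge_atTop 2
  obtain ⟨N, hN⟩ := Filter.eventually_atTop.mp ((hA.and hB).and hC)
  refine ⟨N, fun n hn R hres => ?_⟩
  obtain ⟨⟨h3, h4⟩, hn2⟩ := hN n hn
  have hkey := count_bound n R hres
  set k := R.card with hk
  have hncast : (2 : ℝ) ≤ (n : ℝ) := by exact_mod_cast hn2
  have hL : 0 < Real.log n := Real.log_pos (by linarith)
  -- take logs of the counting bound
  have hlog : (n : ℝ) * Real.log 2 ≤ ((k : ℝ) + 1) * Real.log ((n : ℝ) + 1) := by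
    have hcast : (2 : ℝ) ^ n ≤ ((n : ℝ) + 1) ^ (k + 1) := by
      have := hkey
      have h' : ((2 ^ n : ℕ) : ℝ) ≤ (((n + 1) ^ (k + 1) : ℕ) : ℝ) := by exact_mod_cast this
      push_cast at h'
      convert h' using 2
    have hlog' := Real.log_le_log (by positivity) hcast
    rw [Real.log_pow, Real.log_pow] at hlog'
    push_cast at hlog'
    linarith
  -- log(n+1) ≤ log n + 1
  have hM : Real.log ((n : ℝ) + 1) ≤ Real.log n + 1 := by
    have h1 : ((n : ℝ) + 1) ≤ 2 * n := by linarith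
    have h2 := Real.log_le_log (by linarith) h1
    rw [Real.log_mul (by norm_num) (by linarith)] at h2
    have h3' : Real.log 2 ≤ 1 := by
      have := Real.log_le_sub_one_of_pos (by norm_num : (0:ℝ) < 2)
      linarith
    linarith
  set L := Real.log (n : ℝ) with hLdef
  set ℓ2 := Real.log 2 with hℓ2def
  have hMe : Real.log ((n : ℝ) + 1) ≤ (1 + ε / 2) * L := by nlinarith
  have e1 : (n : ℝ) * ℓ2 ≤ ((k : ℝ) + 1) * ((1 + ε / 2) * L) := by
    calc (n : ℝ) * ℓ2 ≤ ((k : ℝ) + 1) * Real.log ((n : ℝ) + 1) := hlog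
      _ ≤ ((k : ℝ) + 1) * ((1 + ε / 2) * L) := by
          apply mul_le_mul_of_nonneg_left hMe
          positivity
  have e2 : (1 + ε / 2) * ((1 - ε) * ℓ2 * n) + (1 + ε / 2) * L ≤ (n : ℝ) * ℓ2 := by
    nlinarith [mul_le_mul_of_nonneg_left h4 (show (0:ℝ) ≤ 1 + ε / 2 by linarith),
      mul_nonneg (mul_nonneg hε0.le hε0.le) (mul_nonneg hℓ2.le (by linarith : (0:ℝ) ≤ (n:ℝ)))]
  have e3 : (1 + ε / 2) * ((1 - ε) * ℓ2 * n) ≤ (1 + ε / 2) * ((k : ℝ) * L) := by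
    nlinarith [e1, e2]
  have e4 : (1 - ε) * ℓ2 * n ≤ (k : ℝ) * L :=
    le_of_mul_le_mul_left e3 (by linarith)
  rw [div_le_iff₀ hL]
  exact e4
end

section
/- Let X be a finite set with |X| > 1, let x ∈ X, and let a, b ⊆ X with |a| ≠ |b|. Then the set R = {∅, {x}, X\{x}} resolves the pair a, b; i.e., there exists r ∈ R such that Jac(a,r) ≠ Jac(b,r). -/
section helpers
variable {α : Type*} [Fintype α] [DecidableEq α]

lemma jac_empty (a : Finset α) : jac a ∅ = (a.card : ℝ) / (a.card : ℝ) := by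
  simp [jac]

lemma jac_singleton_mem_s6 {x : α} {a : Finset α} (hx : x ∈ a) :
    jac a {x} = ((a.card - 1 : ℕ) : ℝ) / (a.card : ℝ) := by
  have h1 : ({x} : Finset α) \ a = ∅ := by simp [Finset.sdiff_eq_empty_iff_subset, hx]
  have h2 : a ∪ {x} = a := by
    ext y; simp; rintro rfl; exact hx
  simp [jac, h1, h2, Finset.card_sdiff_of_subset (by simp [hx] : ({x} : Finset α) ⊆ a)]

lemma jac_singleton_notMem_s6 {x : α} {a : Finset α} (hx : x ∉ a) (ha : a ≠ ∅) :
    jac a {x} = 1 := by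
  have h1 : a \ {x} = a := by
    ext y; simp; rintro hy rfl; exact hx hy
  have h2 : ({x} : Finset α) \ a = {x} := by
    ext y; simp; rintro rfl; exact hx
  have h3 : (a ∪ {x}).card = a.card + 1 := by
    rw [Finset.card_union_of_disjoint (by simp [hx])]; simp
  have h4 : (a \ {x} ∪ {x} \ a) = a ∪ {x} := by rw [h1, h2]
  rw [jac, h4, div_self]
  rw [h3]; positivity

lemma jac_compl_mem {x : α} {a : Finset α} (hx : x ∈ a) :
    jac a (Finset.univ \ {x}) =
      ((1 + (Fintype.card α - a.card) : ℕ) : ℝ) / ((Fintype.card α : ℕ) : ℝ) := by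
  have h1 : a \ (Finset.univ \ {x}) = {x} := by
    ext y; simp
    intro hy; exact hy ▸ hx
  have h2 : (Finset.univ \ {x}) \ a = Finset.univ \ a := by
    ext y; simp
    rintro hy rfl; exact hy hx
  have h3 : a ∪ (Finset.univ \ {x}) = Finset.univ := by
    ext y; simp; by_cases hy : y = x
    · left; exact hy ▸ hx
    · right; exact hy
  have hdisj : Disjoint ({x} : Finset α) (Finset.univ \ a) := by
    simp [Finset.disjoint_left, hx]
  rw [jac, h1, h2, h3, Finset.card_union_of_disjoint hdisj]
  simp [Finset.card_sdiff_of_subset (Finset.subset_univ a)]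

lemma jac_compl_notMem {x : α} {a : Finset α} (hx : x ∉ a) :
    jac a (Finset.univ \ {x}) =
      ((Fintype.card α - 1 - a.card : ℕ) : ℝ) / ((Fintype.card α - 1 : ℕ) : ℝ) := by
  have hsub : a ⊆ Finset.univ \ {x} := by
    intro y hy; simp; rintro rfl; exact hx hy
  have h1 : a \ (Finset.univ \ {x}) = ∅ := by
    rw [Finset.sdiff_eq_empty_iff_subset]; exact hsub
  have h3 : a ∪ (Finset.univ \ {x}) = Finset.univ \ {x} := Finset.union_eq_right.mpr hsub
  have hcard : (Finset.univ \ {x} : Finset α).card = Fintype.card α - 1 := by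
    rw [Finset.card_sdiff_of_subset (by simp)]; simp
  rw [jac, h1, h3, Finset.empty_union, Finset.card_sdiff_of_subset hsub, hcard]

end helpers

/-- The set `R = {∅, {x}, X \ {x}}` resolves every pair of subsets of different cardinality. -/
theorem stmt6 {α : Type*} [Fintype α] [DecidableEq α]
    (h : 1 < Fintype.card α) (x : α)
    (a b : Finset α) (hab : a.card ≠ b.card) :
    ∃ r ∈ ({∅, {x}, Finset.univ \ {x}} : Set (Finset α)), jac a r ≠ jac b r := by
  have han : a.card ≤ Fintype.card α := a.card_le_univ
  have hbn : b.card ≤ Fintype.card α := b.card_le_univ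
  rcases eq_or_ne a ∅ with ha | ha
  · refine ⟨∅, by simp, ?_⟩
    have hb : b ≠ ∅ := by
      intro hb; apply hab; rw [ha, hb]
    rw [jac_empty, jac_empty, ha]
    have : (b.card : ℝ) / b.card = 1 := by
      rw [div_self]; simpa using Finset.card_ne_zero.mpr (Finset.nonempty_iff_ne_empty.mpr hb)
    rw [this]; simp
  rcases eq_or_ne b ∅ with hb | hb
  · refine ⟨∅, by simp, ?_⟩
    rw [jac_empty, jac_empty, hb]
    have : (a.card : ℝ) / a.card = 1 := by
      rw [div_self]; simpa using Finset.card_ne_zero.mpr (Finset.nonempty_iff_ne_empty.mpr ha)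
    rw [this]; simp
  have hacard : 0 < a.card := Finset.card_pos.mpr (Finset.nonempty_iff_ne_empty.mpr ha)
  have hbcard : 0 < b.card := Finset.card_pos.mpr (Finset.nonempty_iff_ne_empty.mpr hb)
  by_cases hxa : x ∈ a <;> by_cases hxb : x ∈ b
  · -- both contain x : use univ \ {x}
    refine ⟨Finset.univ \ {x}, by simp, ?_⟩
    rw [jac_compl_mem hxa, jac_compl_mem hxb]
    intro heq
    have hd : (0:ℝ) < ((Fintype.card α : ℕ) : ℝ) := by exact_mod_cast Nat.pos_of_ne_zero (by omega)
    rw [div_eq_div_iff (ne_of_gt hd) (ne_of_gt hd)] at heq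
    have := mul_right_cancel₀ (ne_of_gt hd) heq
    have : (1 + (Fintype.card α - a.card) : ℕ) = 1 + (Fintype.card α - b.card) := by
      exact_mod_cast this
    omega
  · -- x ∈ a, x ∉ b : use {x}
    refine ⟨{x}, by simp, ?_⟩
    rw [jac_singleton_mem_s6 hxa, jac_singleton_notMem_s6 hxb hb]
    have : ((a.card - 1 : ℕ) : ℝ) / (a.card : ℝ) < 1 := by
      rw [div_lt_one (by exact_mod_cast hacard)]
      exact_mod_cast Nat.sub_lt hacard one_pos
    exact ne_of_lt this
  · refine ⟨{x}, by simp, ?_⟩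
    rw [jac_singleton_notMem_s6 hxa ha, jac_singleton_mem_s6 hxb]
    have : ((b.card - 1 : ℕ) : ℝ) / (b.card : ℝ) < 1 := by
      rw [div_lt_one (by exact_mod_cast hbcard)]
      exact_mod_cast Nat.sub_lt hbcard one_pos
    exact (ne_of_lt this).symm
  · refine ⟨Finset.univ \ {x}, by simp, ?_⟩
    rw [jac_compl_notMem hxa, jac_compl_notMem hxb]
    intro heq
    have hd : (0:ℝ) < ((Fintype.card α - 1 : ℕ) : ℝ) := by
      have : 0 < Fintype.card α - 1 := by omega
      exact_mod_cast this
    rw [div_eq_div_iff (ne_of_gt hd) (ne_of_gt hd)] at heq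
    have := mul_right_cancel₀ (ne_of_gt hd) heq
    have : (Fintype.card α - 1 - a.card : ℕ) = Fintype.card α - 1 - b.card := by
      exact_mod_cast this
    have hxa' : a.card ≤ Fintype.card α - 1 := by
      have := Finset.card_le_card (show a ⊆ Finset.univ \ {x} from fun y hy => by
        simp; rintro rfl; exact hxa hy)
      simpa [Finset.card_sdiff_of_subset (by simp : ({x}:Finset α) ⊆ Finset.univ)] using this
    have hxb' : b.card ≤ Fintype.card α - 1 := by
      have := Finset.card_le_card (show b ⊆ Finset.univ \ {x} from fun y hy => by
        simp; rintro rfl; exact hxb hy)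
      simpa [Finset.card_sdiff_of_subset (by simp : ({x}:Finset α) ⊆ Finset.univ)] using this
    omega
end

section
/- Let X be a finite set with |X| = n and let a, b, r ⊆ X with |a| < |b|, and set u := b\a and v := a\b. If Jac(a,r) = Jac(b,r) and Jac(a, X\r) = Jac(b, X\r), then, as integers, (n − 2|r|) · ((|v| − 2|v∩r|) − (|u| − 2|u∩r|)) = (|u| − |v|) · n. -/
lemma jac_empty_right {α : Type*} [DecidableEq α] (b : Finset α) (hb : 0 < b.card) :
    jac b ∅ = 1 := by
  unfold jac
  rw [Finset.sdiff_empty, Finset.empty_sdiff, Finset.union_empty]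
  exact div_self (by exact_mod_cast hb.ne')

/-- If `|a| < |b|` and `a, b` collide with both `r` and `X \ r`, then, with `u := b \ a` and
`v := a \ b`, `(n − 2|r|)((|v| − 2|v ∩ r|) − (|u| − 2|u ∩ r|)) = (|u| − |v|) n` as integers. -/
theorem stmt10 {α : Type*} [Fintype α] [DecidableEq α] (n : ℕ)
    (hn : Fintype.card α = n)
    (a b r : Finset α) (hab : a.card < b.card)
    (h1 : jac a r = jac b r)
    (h2 : jac a (Finset.univ \ r) = jac b (Finset.univ \ r)) :
    ((n : ℤ) - 2 * (r.card : ℤ)) *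
        ((((a \ b).card : ℤ) - 2 * (((a \ b) ∩ r).card : ℤ)) -
          (((b \ a).card : ℤ) - 2 * (((b \ a) ∩ r).card : ℤ))) =
      (((b \ a).card : ℤ) - ((a \ b).card : ℤ)) * (n : ℤ) := by
  classical
  have hb : 0 < b.card := by omega
  have hc : Finset.univ \ r = rᶜ := (Finset.compl_eq_univ_sdiff r).symm
  rw [hc] at h2
  -- denominators involving b are positive
  have hbr : 0 < (b ∪ r).card :=
    lt_of_lt_of_le hb (Finset.card_le_card Finset.subset_union_left)
  have hbr' : 0 < (b ∪ rᶜ).card :=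
    lt_of_lt_of_le hb (Finset.card_le_card Finset.subset_union_left)
  -- a ∪ r is nonempty
  have har : 0 < (a ∪ r).card := by
    rcases Nat.eq_zero_or_pos (a ∪ r).card with h0 | h
    · exfalso
      rw [Finset.card_eq_zero, Finset.union_eq_empty] at h0
      rw [h0.1, h0.2, jac_empty_right b hb] at h1
      simp [jac] at h1
    · exact h
  have har' : 0 < (a ∪ rᶜ).card := by
    rcases Nat.eq_zero_or_pos (a ∪ rᶜ).card with h0 | h
    · exfalso
      rw [Finset.card_eq_zero, Finset.union_eq_empty] at h0
      rw [h0.1, h0.2, jac_empty_right b hb] at h2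
      simp [jac] at h2
    · exact h
  -- cross multiply h1 and h2
  unfold jac at h1 h2
  rw [div_eq_div_iff (by exact_mod_cast har.ne') (by exact_mod_cast hbr.ne')] at h1
  rw [div_eq_div_iff (by exact_mod_cast har'.ne') (by exact_mod_cast hbr'.ne')] at h2
  have E1 : (((a \ r) ∪ (r \ a)).card : ℤ) * ((b ∪ r).card : ℤ) =
      (((b \ r) ∪ (r \ b)).card : ℤ) * ((a ∪ r).card : ℤ) := by exact_mod_cast h1
  have E2 : (((a \ rᶜ) ∪ (rᶜ \ a)).card : ℤ) * ((b ∪ rᶜ).card : ℤ) =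
      (((b \ rᶜ) ∪ (rᶜ \ b)).card : ℤ) * ((a ∪ rᶜ).card : ℤ) := by exact_mod_cast h2
  -- card identities
  have symm_card : ∀ s t : Finset α,
      ((s \ t ∪ t \ s).card : ℤ) = (s.card : ℤ) + t.card - 2 * (s ∩ t).card := by
    intro s t
    have d1 : (s \ t ∪ t \ s).card = (s \ t).card + (t \ s).card :=
      Finset.card_union_of_disjoint disjoint_sdiff_sdiff
    have d2 := Finset.card_sdiff_add_card_inter s t
    have d3 := Finset.card_sdiff_add_card_inter t s
    rw [Finset.inter_comm t s] at d3
    omega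
  have union_card : ∀ s t : Finset α,
      ((s ∪ t).card : ℤ) = (s.card : ℤ) + t.card - (s ∩ t).card := by
    intro s t
    have := Finset.card_union_add_card_inter s t
    omega
  -- complement facts
  have hrc : (rᶜ.card : ℤ) = (n : ℤ) - r.card := by
    have := Finset.card_compl_add_card r
    omega
  have inter_compl : ∀ s : Finset α, ((s ∩ rᶜ).card : ℤ) = (s.card : ℤ) - (s ∩ r).card := by
    intro s
    have e : s ∩ rᶜ = s \ r := by ext x; simp
    have := Finset.card_sdiff_add_card_inter s r
    rw [e]
    omega
  have zab : ((a \ b).card : ℤ) = (a.card : ℤ) - (a ∩ b).card := by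
    have := Finset.card_sdiff_add_card_inter a b
    omega
  have zba : ((b \ a).card : ℤ) = (b.card : ℤ) - (a ∩ b).card := by
    have := Finset.card_sdiff_add_card_inter b a
    rw [Finset.inter_comm b a] at this
    omega
  have zabr : (((a \ b) ∩ r).card : ℤ) = ((a ∩ r).card : ℤ) - (a ∩ b ∩ r).card := by
    have e1 : (a \ b) ∩ r = (a ∩ r) \ b := by ext x; simp; tauto
    have e2 : (a ∩ r) ∩ b = a ∩ b ∩ r := by ext x; simp; tauto
    have := Finset.card_sdiff_add_card_inter (a ∩ r) b
    rw [e2] at this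
    rw [e1]
    omega
  have zbar : (((b \ a) ∩ r).card : ℤ) = ((b ∩ r).card : ℤ) - (a ∩ b ∩ r).card := by
    have e1 : (b \ a) ∩ r = (b ∩ r) \ a := by ext x; simp; tauto
    have e2 : (b ∩ r) ∩ a = a ∩ b ∩ r := by ext x; simp; tauto
    have := Finset.card_sdiff_add_card_inter (b ∩ r) a
    rw [e2] at this
    rw [e1]
    omega
  simp only [symm_card, union_card] at E1 E2
  simp only [hrc, inter_compl] at E2
  rw [zab, zba, zabr, zbar]
  linear_combination (-2 : ℤ) * E1 - 2 * E2
end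

section
/- For every integer i ≥ 1, the central binomial coefficient satisfies C(2i, i) ≤ 4^i / √(πi). -/
open Stirling Real Filter Topology Nat

private lemma sqrt_pi_le_stirlingSeq (n : ℕ) (hn : 1 ≤ n) : Real.sqrt Real.pi ≤ stirlingSeq n := by
  obtain ⟨m, rfl⟩ := Nat.exists_eq_add_of_le hn
  have h : Tendsto (stirlingSeq ∘ Nat.succ) atTop (𝓝 (Real.sqrt Real.pi)) :=
    tendsto_stirlingSeq_sqrt_pi.comp (tendsto_add_atTop_nat 1)
  have := stirlingSeq'_antitone.le_of_tendsto h m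
  simpa [Nat.add_comm] using this

private lemma key_identity (n : ℕ) (hn : 1 ≤ n) :
    (Nat.choose (2 * n) n : ℝ) =
      stirlingSeq (2 * n) / stirlingSeq n ^ 2 * (4 ^ n / Real.sqrt n) := by
  have hx : (0 : ℝ) < n := by exact_mod_cast hn
  have hd1 : (0 : ℝ) < Real.sqrt (2 * n) * ((n : ℝ) / Real.exp 1) ^ n := by positivity
  have hd2 : (0 : ℝ) < Real.sqrt (2 * (2 * n : ℕ)) * (((2 * n : ℕ) : ℝ) / Real.exp 1) ^ (2 * n) := by
    push_cast; positivity
  have fn : ((n ! : ℕ) : ℝ) = stirlingSeq n * (Real.sqrt (2 * n) * ((n : ℝ) / Real.exp 1) ^ n) := by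
    rw [stirlingSeq, div_mul_cancel₀ _ hd1.ne']
  have f2n : (((2 * n) ! : ℕ) : ℝ) =
      stirlingSeq (2 * n) * (Real.sqrt (2 * (2 * n : ℕ)) * (((2 * n : ℕ) : ℝ) / Real.exp 1) ^ (2 * n)) := by
    rw [stirlingSeq, div_mul_cancel₀ _ hd2.ne']
  have hch : (Nat.choose (2 * n) n : ℝ) * ((n ! : ℕ) : ℝ) * ((n ! : ℕ) : ℝ) = (((2 * n) ! : ℕ) : ℝ) := by
    have := Nat.choose_mul_factorial_mul_factorial (show n ≤ 2 * n by omega)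
    rw [show 2 * n - n = n by omega] at this
    exact_mod_cast this
  have hs1 : Real.sqrt (2 * (2 * n : ℕ) : ℝ) = 2 * Real.sqrt n := by
    push_cast
    rw [show (2 : ℝ) * (2 * n) = 2 ^ 2 * n by ring, Real.sqrt_mul (by positivity), Real.sqrt_sq (by norm_num)]
  have hpow : (((2 * n : ℕ) : ℝ) / Real.exp 1) ^ (2 * n) = 4 ^ n * (((n : ℝ) / Real.exp 1) ^ n) ^ 2 := by
    push_cast
    rw [show (2 : ℝ) * n / Real.exp 1 = 2 * ((n : ℝ) / Real.exp 1) by ring, mul_pow, ← pow_mul,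
      show (2 : ℝ) ^ (2 * n) = 4 ^ n by rw [pow_mul]; norm_num]
    ring
  have hsq : Real.sqrt (2 * n : ℝ) ^ 2 = 2 * n := Real.sq_sqrt (by positivity)
  have hsn : Real.sqrt (n : ℝ) * Real.sqrt n = n := Real.mul_self_sqrt hx.le
  have hs0 : (0 : ℝ) < stirlingSeq n := by
    obtain ⟨m, rfl⟩ := Nat.exists_eq_add_of_le hn
    simpa [Nat.add_comm] using stirlingSeq'_pos m
  have hsqn : (0 : ℝ) < Real.sqrt n := Real.sqrt_pos.mpr hx
  have hpn : (0 : ℝ) < ((n : ℝ) / Real.exp 1) ^ n := by positivity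
  rw [fn, f2n, hs1, hpow] at hch
  have hcancel : (Nat.choose (2 * n) n : ℝ) * (stirlingSeq n ^ 2 * Real.sqrt n) =
      stirlingSeq (2 * n) * 4 ^ n := by
    have h2p : (0 : ℝ) < 2 * Real.sqrt n * (((n : ℝ) / Real.exp 1) ^ n) ^ 2 := by positivity
    apply mul_right_cancel₀ h2p.ne'
    linear_combination hch + ((Nat.choose (2 * n) n : ℝ) * stirlingSeq n ^ 2 *
      (((n : ℝ) / Real.exp 1) ^ n) ^ 2) * (2 * hsn - hsq)
  field_simp
  linear_combination hcancel

/-- For every `i ≥ 1`, the central binomial coefficient satisfies `C(2i, i) ≤ 4^i / √(π i)`. -/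
theorem stmt12 (i : ℕ) (hi : 1 ≤ i) :
    (Nat.choose (2 * i) i : ℝ) ≤ 4 ^ i / Real.sqrt (Real.pi * i) := by
  have hx : (0 : ℝ) < i := by exact_mod_cast hi
  have hs0 : (0 : ℝ) < stirlingSeq i :=
    lt_of_lt_of_le (Real.sqrt_pos.mpr Real.pi_pos) (sqrt_pi_le_stirlingSeq i hi)
  have h2i : stirlingSeq (2 * i) ≤ stirlingSeq i := by
    obtain ⟨m, rfl⟩ := Nat.exists_eq_add_of_le hi
    have := stirlingSeq'_antitone (show m ≤ 2 * (1 + m) - 1 by omega)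
    simp only [Function.comp_apply, Nat.succ_eq_add_one] at this
    rw [show 2 * (1 + m) - 1 + 1 = 2 * (1 + m) by omega, show m + 1 = 1 + m by omega] at this
    exact this
  have hpi : Real.sqrt Real.pi ≤ stirlingSeq i := sqrt_pi_le_stirlingSeq i hi
  rw [key_identity i hi]
  have hsplit : Real.sqrt (Real.pi * i) = Real.sqrt Real.pi * Real.sqrt i :=
    Real.sqrt_mul Real.pi_pos.le _
  rw [hsplit]
  have hsqn : (0 : ℝ) < Real.sqrt i := Real.sqrt_pos.mpr hx
  have h1 : stirlingSeq (2 * i) / stirlingSeq i ^ 2 ≤ 1 / Real.sqrt Real.pi := by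
    rw [div_le_div_iff₀ (by positivity) (Real.sqrt_pos.mpr Real.pi_pos)]
    calc stirlingSeq (2 * i) * Real.sqrt Real.pi ≤ stirlingSeq i * stirlingSeq i :=
          mul_le_mul h2i hpi (Real.sqrt_nonneg _) hs0.le
      _ = 1 * stirlingSeq i ^ 2 := by ring
  calc stirlingSeq (2 * i) / stirlingSeq i ^ 2 * (4 ^ i / Real.sqrt i)
      ≤ 1 / Real.sqrt Real.pi * (4 ^ i / Real.sqrt i) := by
        apply mul_le_mul_of_nonneg_right h1; positivity
    _ = 4 ^ i / (Real.sqrt Real.pi * Real.sqrt i) := by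
        rw [_root_.div_mul_div_comm, one_mul]
end

section
/- There exists N₀ such that for all integers n ≥ N₀ and all real numbers τ with 2 ≤ τ ≤ n/2, one has 4τ·ln(n·e/τ)/ln(τ) ≤ 2n·ln(2e)/ln(n/2). Consequently, for all integers n ≥ N₀, all real k ≥ 2n·ln(2e)/ln(n/2), and all integers i with 2 ≤ i ≤ ⌊n/2⌋, one has (n·e/i)^{2i} ≤ i^{k/2}. -/
set_option maxHeartbeats 1000000

private lemma stmt13_keyB (c u t : ℝ) (hc : (1.69:ℝ) ≤ c) (hu : (3:ℝ) ≤ u) (ht : 0 ≤ t) :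
    (c + t) * (u + t) ≤ Real.exp t * (c * u) := by
  have hexp_t : (1 + t/2)^2 ≤ Real.exp t := by
    have h1 : 1 + t/2 ≤ Real.exp (t/2) := by
      have := Real.add_one_le_exp (t/2); linarith
    have h2' : Real.exp (t/2) * Real.exp (t/2) = Real.exp t := by
      rw [← Real.exp_add]; ring_nf
    nlinarith [Real.exp_pos (t/2)]
  have h3 : 0 ≤ c * u - c - u := by nlinarith
  have h4 : 0 ≤ c * u - 4 := by nlinarith
  have h5 : (c + t) * (u + t) ≤ c * u * (1 + t/2)^2 := by
    nlinarith [mul_nonneg ht h3, mul_nonneg (mul_nonneg ht ht) h4]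
  nlinarith [h5, hexp_t, mul_le_mul_of_nonneg_left hexp_t (by nlinarith : (0:ℝ) ≤ c * u)]

private lemma stmt13_num (L s l2 : ℝ) (hL0 : 0 ≤ L) (hs0 : 0 < s)
    (hL2 : L * L ≤ 16 * s) (hN : (10000000:ℝ) ≤ s * s) (hl2 : (0.69:ℝ) ≤ l2) :
    84 * L * L ≤ 2 * (s * s) * l2 := by
  have hs1344 : (1344:ℝ) ≤ s := by nlinarith
  nlinarith [mul_nonneg (sub_nonneg.mpr hs1344) hs0.le]

/-- Key pointwise bound. -/
lemma stmt13_key (n : ℕ) (hn : 10000000 ≤ n) :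
    ∀ τ : ℝ, 2 ≤ τ → τ ≤ (n : ℝ) / 2 →
      4 * τ * Real.log ((n : ℝ) * Real.exp 1 / τ) / Real.log τ ≤
        2 * (n : ℝ) * Real.log (2 * Real.exp 1) / Real.log ((n : ℝ) / 2) := by
  intro τ h2 hτ
  have hN : (10000000 : ℝ) ≤ (n : ℝ) := by exact_mod_cast hn
  set N : ℝ := (n : ℝ) with hNdef
  have hN0 : (0:ℝ) < N := by linarith
  have hτ0 : (0:ℝ) < τ := by linarith
  have hl2 : (0.6931471803 : ℝ) < Real.log 2 := Real.log_two_gt_d9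
  have hl2' : Real.log 2 < 0.6931471808 := Real.log_two_lt_d9
  -- names
  set u := Real.log τ with hu_def
  set v := Real.log (N / 2) with hv_def
  set c := Real.log 2 + 1 with hc_def
  have hu2 : Real.log 2 ≤ u := Real.log_le_log (by norm_num) h2
  have hu0 : 0 < u := by linarith
  have hvlog : v = Real.log N - Real.log 2 := by
    rw [hv_def, Real.log_div (by positivity) (by norm_num)]
  have hlogN : Real.log 1000000 ≤ Real.log N := Real.log_le_log (by norm_num) (by linarith)
  have hlogN2 : (2:ℝ) ≤ Real.log N := by
    have h6 : (2:ℝ) ≤ Real.log 1000000 := by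
      have : ((2:ℝ):ℝ) = Real.log (Real.exp 2) := by rw [Real.log_exp]
      rw [this]
      apply Real.log_le_log (Real.exp_pos _)
      have he : Real.exp 1 < 2.7182818286 := Real.exp_one_lt_d9
      have : Real.exp 2 = Real.exp 1 * Real.exp 1 := by
        rw [← Real.exp_add]; norm_num
      rw [this]; nlinarith [Real.exp_pos (1:ℝ)]
    linarith
  have hv0 : (0:ℝ) < v := by rw [hvlog]; linarith
  have huv : u ≤ v := Real.log_le_log hτ0 hτ
  have hlog_num : Real.log (N * Real.exp 1 / τ) = Real.log N + 1 - u := by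
    rw [Real.log_div (by positivity) (by positivity),
       Real.log_mul (by positivity) (by positivity), Real.log_exp]
  have hlog_2e : Real.log (2 * Real.exp 1) = c := by
    rw [Real.log_mul (by norm_num) (by positivity), Real.log_exp]
  rw [hlog_num, hlog_2e]
  set L := Real.log N + 1 with hL_def
  have hLvc : L = v + c := by rw [hvlog, hc_def]; ring
  have hvL : v < L := by rw [hLvc]; nlinarith
  have hLu : 0 ≤ L - u := by linarith
  rcases le_or_gt u 3 with hu3 | hu3
  · -- small τ: crude bound
    have hτ21 : τ ≤ 21 := by
      have h1 : τ = Real.exp u := (Real.exp_log hτ0).symm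
      have h2' : Real.exp u ≤ Real.exp 3 := Real.exp_le_exp.mpr hu3
      have h3 : Real.exp 3 = Real.exp 1 * Real.exp 1 * Real.exp 1 := by
        rw [← Real.exp_add, ← Real.exp_add]; norm_num
      have he : Real.exp 1 < 2.7182818286 := Real.exp_one_lt_d9
      nlinarith [Real.exp_pos (1:ℝ)]
    have hL0 : 0 < L := by linarith
    have step1 : 4 * τ * (L - u) / u ≤ 84 * L / Real.log 2 := by
      apply div_le_div₀ (by positivity) ?_ (by linarith) hu2
      nlinarith
    have step2 : 84 * L / Real.log 2 ≤ 2 * N / L := by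
      rw [div_le_div_iff₀ (by linarith) hL0]
      -- need 84 L * L ≤ 2 N log 2
      have h14 : Real.log N ≤ 4 * N ^ ((1:ℝ)/4) - 4 := by
        have hrw : Real.log (N ^ ((1:ℝ)/4)) = (1/4) * Real.log N :=
          Real.log_rpow hN0 _
        have hle : Real.log (N ^ ((1:ℝ)/4)) ≤ N ^ ((1:ℝ)/4) - 1 :=
          Real.log_le_sub_one_of_pos (by positivity)
        linarith
      set A := N ^ ((1:ℝ)/4) with hA
      have hA0 : 0 < A := by positivity
      have hA1 : (1:ℝ) ≤ A := by
        rw [hA]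
        apply Real.one_le_rpow (by linarith) (by norm_num)
      set s := N ^ ((1:ℝ)/2) with hs
      have hs0 : 0 < s := by positivity
      have hAA : A * A = s := by
        rw [hA, hs, ← Real.rpow_add hN0]; norm_num
      have hss : s * s = N := by
        rw [hs, ← Real.rpow_add hN0]; norm_num
      have hLA : L ≤ 4 * A := by rw [hL_def]; linarith
      have hL0' : 0 ≤ L := le_of_lt hL0
      have hL2 : L * L ≤ 16 * s := by
        have h := mul_le_mul hLA hLA hL0' (by linarith : (0:ℝ) ≤ 4 * A)
        have h2 : (4 * A) * (4 * A) = 16 * s := by rw [← hAA]; ring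
        linarith
      have hN' : (10000000:ℝ) ≤ s * s := by rw [hss]; exact hN
      have := stmt13_num L s (Real.log 2) hL0' hs0 hL2 hN' (by linarith)
      rw [hss] at this
      linarith
    have step3 : 2 * N / L ≤ 2 * N * c / v := by
      have hc1 : (1:ℝ) ≤ c := by rw [hc_def]; linarith
      apply div_le_div₀ ?_ ?_ hv0 (le_of_lt hvL)
      · positivity
      · exact le_mul_of_one_le_right (by positivity) hc1
    linarith
  · -- large τ: monotonicity estimate
    set t := v - u with ht_def
    have ht : 0 ≤ t := by linarith
    rw [div_le_div_iff₀ hu0 hv0]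
    have hτe : τ = Real.exp u := (Real.exp_log hτ0).symm
    have hNe : N = 2 * Real.exp v := by
      have : Real.exp v = N / 2 := Real.exp_log (by linarith)
      linarith
    have hexpv : Real.exp v = Real.exp u * Real.exp t := by
      rw [← Real.exp_add]; congr 1; rw [ht_def]; ring
    have hc169 : (1.69:ℝ) ≤ c := by rw [hc_def]; linarith
    have hkey : (c + t) * (u + t) ≤ Real.exp t * (c * u) :=
      stmt13_keyB c u t hc169 (le_of_lt hu3) ht
    have hLu_eq : L - u = c + t := by rw [hLvc, ht_def]; ring
    have hveq : v = u + t := by rw [ht_def]; ring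
    rw [hLu_eq, hτe, hNe, hexpv, hveq]
    have hE : 0 < Real.exp u := Real.exp_pos u
    calc 4 * Real.exp u * (c + t) * (u + t)
        = 4 * Real.exp u * ((c + t) * (u + t)) := by ring
      _ ≤ 4 * Real.exp u * (Real.exp t * (c * u)) := by
          apply mul_le_mul_of_nonneg_left hkey (by positivity)
      _ = 2 * (2 * (Real.exp u * Real.exp t)) * c * u := by ring

/-- For all large `n`: the function `τ ↦ 4τ ln(ne/τ)/ln τ` is bounded on `[2, n/2]` by
`2n ln(2e)/ln(n/2)`; consequently, for `k ≥ 2n ln(2e)/ln(n/2)` and `2 ≤ i ≤ ⌊n/2⌋`,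
`(ne/i)^{2i} ≤ i^{k/2}`. -/
theorem stmt13 :
    ∃ N₀ : ℕ, ∀ n : ℕ, N₀ ≤ n →
      (∀ τ : ℝ, 2 ≤ τ → τ ≤ (n : ℝ) / 2 →
        4 * τ * Real.log ((n : ℝ) * Real.exp 1 / τ) / Real.log τ ≤
          2 * (n : ℝ) * Real.log (2 * Real.exp 1) / Real.log ((n : ℝ) / 2)) ∧
      (∀ k : ℝ, 2 * (n : ℝ) * Real.log (2 * Real.exp 1) / Real.log ((n : ℝ) / 2) ≤ k →
        ∀ i : ℕ, 2 ≤ i → i ≤ n / 2 →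
          ((n : ℝ) * Real.exp 1 / (i : ℝ)) ^ (2 * i) ≤ (i : ℝ) ^ (k / 2)) := by
  refine ⟨10000000, fun n hn => ⟨stmt13_key n hn, ?_⟩⟩
  intro k hk i hi2 hin
  have hi2' : (2:ℝ) ≤ (i:ℝ) := by exact_mod_cast hi2
  have hi0 : (0:ℝ) < (i:ℝ) := by linarith
  have h2i : i * 2 ≤ n := (Nat.le_div_iff_mul_le (by norm_num)).mp hin
  have hin' : (i:ℝ) ≤ (n:ℝ)/2 := by
    have : ((i:ℝ)) * 2 ≤ (n:ℝ) := by exact_mod_cast h2i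
    linarith
  have h1 := stmt13_key n hn (i:ℝ) hi2' hin'
  have h2 : 4 * (i:ℝ) * Real.log ((n:ℝ) * Real.exp 1 / (i:ℝ)) / Real.log i ≤ k :=
    le_trans h1 hk
  have hlogi : 0 < Real.log (i:ℝ) := Real.log_pos (by linarith)
  have h3 : 4 * (i:ℝ) * Real.log ((n:ℝ) * Real.exp 1 / (i:ℝ)) ≤ k * Real.log i :=
    (div_le_iff₀ hlogi).mp h2
  have hb : (0:ℝ) < (n:ℝ) * Real.exp 1 / (i:ℝ) := by
    have hn0 : (0:ℝ) < (n:ℝ) := by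
      have : (10000000:ℝ) ≤ (n:ℝ) := by exact_mod_cast hn
      linarith
    positivity
  have hpow : ((n:ℝ) * Real.exp 1 / (i:ℝ)) ^ (2 * i)
      = Real.exp (((2 * i : ℕ) : ℝ) * Real.log ((n:ℝ) * Real.exp 1 / (i:ℝ))) := by
    rw [← Real.log_pow, Real.exp_log (pow_pos hb _)]
  have hrpow : (i:ℝ) ^ (k/2) = Real.exp (Real.log (i:ℝ) * (k/2)) :=
    Real.rpow_def_of_pos hi0 _
  rw [hpow, hrpow]
  apply Real.exp_le_exp.mpr
  push_cast
  nlinarith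
end

section
/- For all sufficiently large n, the metric dimension β(2^{Fin n}, Jac)—the minimum cardinality of a subset of the power set of Fin n that resolves (2^{Fin n}, Jac)—satisfies β(2^{Fin n}, Jac) ≤ 3 + ⌈2·ln(2e)·n/ln(n/2)⌉. -/
/-- The metric dimension of `(2^{Fin n}, Jac)`: the least cardinality of a resolving set. -/
noncomputable def metricDim (n : ℕ) : ℕ :=
  sInf {m : ℕ | ∃ R : Finset (Finset (Fin n)), R.card = m ∧
    ∀ a b : Finset (Fin n), a ≠ b → ∃ r ∈ R, jac a r ≠ jac b r}

open Finset Filter Real Asymptotics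



section JacLemmas
variable {α : Type*} [DecidableEq α]

lemma card_symmDiff_add (a r : Finset α) :
    ((a \ r) ∪ (r \ a)).card + 2 * (a ∩ r).card = a.card + r.card := by
  have h1 : Disjoint (a \ r) (r \ a) := disjoint_sdiff_sdiff
  rw [card_union_of_disjoint h1]
  have h2 : (a \ r).card + (a ∩ r).card = a.card := card_sdiff_add_card_inter a r
  have h3 : (r \ a).card + (r ∩ a).card = r.card := card_sdiff_add_card_inter r a
  rw [inter_comm] at h3
  omega

lemma jac_ne_of_inter_ne {a b r : Finset α} (hcard : a.card = b.card)
    (h : (a ∩ r).card ≠ (b ∩ r).card) : jac a r ≠ jac b r := by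
  have hr : r.Nonempty := by
    rcases r.eq_empty_or_nonempty with rfl | h' ; · simp at h
    exact h'
  have hu1 : 0 < (a ∪ r).card := card_pos.mpr (hr.mono subset_union_right)
  have hu2 : 0 < (b ∪ r).card := card_pos.mpr (hr.mono subset_union_right)
  have e1 : (a ∪ r).card + (a ∩ r).card = a.card + r.card := card_union_add_card_inter a r
  have e2 : (b ∪ r).card + (b ∩ r).card = b.card + r.card := card_union_add_card_inter b r
  have f1 := card_symmDiff_add a r
  have f2 := card_symmDiff_add b r
  intro hjac
  unfold jac at hjac
  rw [div_eq_div_iff (by positivity) (by positivity)] at hjac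
  have E1 : ((a ∪ r).card : ℝ) + ((a ∩ r).card : ℝ) = a.card + r.card := by exact_mod_cast e1
  have E2 : ((b ∪ r).card : ℝ) + ((b ∩ r).card : ℝ) = b.card + r.card := by exact_mod_cast e2
  have F1 : (((a \ r) ∪ (r \ a)).card : ℝ) + 2 * ((a ∩ r).card : ℝ) = a.card + r.card := by
    exact_mod_cast f1
  have F2 : (((b \ r) ∪ (r \ b)).card : ℝ) + 2 * ((b ∩ r).card : ℝ) = b.card + r.card := by
    exact_mod_cast f2
  have hc : (b.card : ℝ) = a.card := by exact_mod_cast hcard.symm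
  have hRpos : (0:ℝ) < r.card := by exact_mod_cast card_pos.mpr hr
  have hs : (0:ℝ) ≤ a.card := by positivity
  have ht : ((a ∩ r).card : ℝ) ≠ ((b ∩ r).card : ℝ) := by exact_mod_cast h
  apply ht
  have hu : (0:ℝ) < (a.card : ℝ) + r.card := by linarith
  have key : ((a.card : ℝ) + r.card) * ((a ∩ r).card : ℝ)
      = ((a.card : ℝ) + r.card) * ((b ∩ r).card : ℝ) := by nlinarith [hjac]
  exact mul_left_cancel₀ (ne_of_gt hu) key

lemma jac_univ_ne [Fintype α] {a b : Finset α} (h : a.card ≠ b.card) :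
    jac a (univ : Finset α) ≠ jac b univ := by
  have hn : 0 < Fintype.card α := by
    rcases Nat.eq_zero_or_pos (Fintype.card α) with h0 | h0
    · exfalso; apply h
      have ha := card_le_card (subset_univ a)
      have hb := card_le_card (subset_univ b)
      rw [card_univ, h0] at ha hb; omega
    · exact h0
  intro hjac
  unfold jac at hjac
  have ea : a \ univ = ∅ := by simp
  have eb : b \ univ = ∅ := by simp
  have ua : a ∪ univ = univ := by simp
  have ub : b ∪ univ = univ := by simp
  rw [ea, eb, ua, ub] at hjac
  simp only [empty_union, card_univ_diff, card_univ] at hjac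
  have ha := card_le_card (subset_univ a)
  have hb := card_le_card (subset_univ b)
  rw [card_univ] at ha hb
  apply h
  field_simp at hjac
  have hj : Fintype.card α - a.card = Fintype.card α - b.card := by exact_mod_cast hjac
  omega

end JacLemmas

section Counting
variable {n m : ℕ}

lemma count_balanced (A B : Finset (Fin n)) (hd : Disjoint A B) (hc : A.card = B.card) :
    ((univ : Finset (Finset (Fin n))).filter fun r => (A ∩ r).card = (B ∩ r).card).card ≤
      (2 * A.card).choose A.card * 2 ^ (n - 2 * A.card) := by
  classical
  set d := A.card with hdd
  have hAB : (A ∪ B).card = 2 * d := by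
    rw [card_union_of_disjoint hd, ← hc]; ring
  have target : ((A ∪ B).powersetCard d ×ˢ ((univ : Finset (Fin n)) \ (A ∪ B)).powerset).card
      = (2 * d).choose d * 2 ^ (n - 2 * d) := by
    rw [card_product, card_powersetCard, card_powerset, hAB, card_sdiff_of_subset (subset_univ _),
      card_univ, Fintype.card_fin, hAB]
  rw [← target]
  apply card_le_card_of_injOn (fun r => ((A \ r) ∪ (r ∩ B), r \ (A ∪ B)))
  · intro r hr
    rw [mem_coe, mem_filter] at hr
    obtain ⟨-, hbal⟩ := hr
    rw [mem_coe, mem_product]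
    constructor
    · rw [mem_powersetCard]
      constructor
      · exact union_subset ((sdiff_subset).trans subset_union_left)
          ((inter_subset_right).trans subset_union_right)
      · have hdisj : Disjoint (A \ r) (r ∩ B) :=
          hd.mono sdiff_subset inter_subset_right
        rw [card_union_of_disjoint hdisj]
        have h1 : (A \ r).card + (A ∩ r).card = A.card := card_sdiff_add_card_inter A r
        have h2 : (r ∩ B).card = (B ∩ r).card := by rw [inter_comm]
        have h3 : (B ∩ r).card ≤ d := by
          rw [hc]; exact card_le_card inter_subset_left
        omega
    · rw [mem_powerset]
      exact sdiff_subset_sdiff (subset_univ _) le_rfl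
  · intro r1 h1 r2 h2 heq
    simp only [Prod.mk.injEq] at heq
    obtain ⟨q1, q2⟩ := heq
    ext x
    by_cases hA : x ∈ A
    · have hB : x ∉ B := fun hxB => (disjoint_left.mp hd hA) hxB
      have k1 : x ∈ (A \ r1) ∪ (r1 ∩ B) ↔ x ∉ r1 := by
        simp [hA, hB]
      have k2 : x ∈ (A \ r2) ∪ (r2 ∩ B) ↔ x ∉ r2 := by
        simp [hA, hB]
      rw [q1] at k1
      constructor
      · intro hx1
        by_contra hx2
        exact k1.mp (k2.mpr hx2) hx1
      · intro hx2
        by_contra hx1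
        exact k2.mp (k1.mpr hx1) hx2
    · by_cases hB : x ∈ B
      · have k1 : x ∈ (A \ r1) ∪ (r1 ∩ B) ↔ x ∈ r1 := by simp [hA, hB]
        have k2 : x ∈ (A \ r2) ∪ (r2 ∩ B) ↔ x ∈ r2 := by simp [hA, hB]
        rw [← k1, q1, k2]
      · have k1 : x ∈ r1 \ (A ∪ B) ↔ x ∈ r1 := by simp [hA, hB]
        have k2 : x ∈ r2 \ (A ∪ B) ↔ x ∈ r2 := by simp [hA, hB]
        rw [← k1, q2, k2]

lemma count_badF (A B : Finset (Fin n)) (hd : Disjoint A B) (hc : A.card = B.card) :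
    ((univ : Finset (Fin m → Finset (Fin n))).filter fun F =>
        ∀ j, (A ∩ F j).card = (B ∩ F j).card).card ≤
      ((2 * A.card).choose A.card * 2 ^ (n - 2 * A.card)) ^ m := by
  classical
  have heq : ((univ : Finset (Fin m → Finset (Fin n))).filter fun F =>
        ∀ j, (A ∩ F j).card = (B ∩ F j).card)
      = Fintype.piFinset (fun _ : Fin m =>
          (univ : Finset (Finset (Fin n))).filter fun r => (A ∩ r).card = (B ∩ r).card) := by
    ext F
    simp [Fintype.mem_piFinset]
  rw [heq, Fintype.card_piFinset]
  rw [Finset.prod_const, card_univ, Fintype.card_fin]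
  exact Nat.pow_le_pow_left (count_balanced A B hd hc) m

end Counting

lemma choose_le_two_pow_all (n d : ℕ) : n.choose d ≤ 2 ^ n := by
  rcases le_or_gt d n with h | h
  · calc n.choose d ≤ (Finset.range (n+1)).sum n.choose := by
          apply Finset.single_le_sum (f := n.choose) (fun i _ => Nat.zero_le _)
          exact Finset.mem_range.mpr (by omega)
      _ = 2 ^ n := Nat.sum_range_choose n
  · rw [Nat.choose_eq_zero_of_lt h]; exact Nat.zero_le _

lemma centralBinom_sq_mul_le (d : ℕ) : Nat.centralBinom d ^ 2 * (d + 1) ≤ 16 ^ d := by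
  induction d with
  | zero => simp [Nat.centralBinom]
  | succ d ih =>
    have key := Nat.succ_mul_centralBinom_succ d
    have h1 : Nat.centralBinom (d+1) ^ 2 * (d + 1 + 1) * (d+1)^3 ≤ 16 ^ (d+1) * (d+1)^3 := by
      have e1 : Nat.centralBinom (d+1) ^ 2 * (d + 1 + 1) * (d+1)^3
          = ((d+1) * Nat.centralBinom (d+1))^2 * ((d+2)*(d+1)) := by ring
      rw [e1, key]
      have e2 : (2 * (2*d+1) * Nat.centralBinom d)^2 * ((d+2)*(d+1))
          = ((2*(2*d+1))^2 * (d+2)) * (Nat.centralBinom d ^ 2 * (d+1)) := by ring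
      rw [e2]
      calc ((2*(2*d+1))^2 * (d+2)) * (Nat.centralBinom d ^ 2 * (d+1))
          ≤ ((2*(2*d+1))^2 * (d+2)) * 16 ^ d := Nat.mul_le_mul_left _ ih
        _ ≤ (16 * (d+1)^3) * 16 ^ d := by
            apply Nat.mul_le_mul_right
            nlinarith
        _ = 16 ^ (d+1) * (d+1)^3 := by ring
    exact Nat.le_of_mul_le_mul_right h1 (by positivity)

lemma star_of_dagger {n m : ℕ}
    (dagger : ∀ d, 1 ≤ d → 2 * d ≤ n → 64 * n^2 * (n.choose d)^4 ≤ (d+1)^m) :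
    ∀ d, 1 ≤ d → 2 * d ≤ n →
      8 * n * ((n.choose d) ^ 2 * ((2 * d).choose d) ^ m) ≤ 4 ^ (d * m) := by
  intro d h1 h2
  have hCB : ((2*d).choose d) = Nat.centralBinom d := (Nat.centralBinom_eq_two_mul_choose d).symm
  have hsq : (8 * n * ((n.choose d) ^ 2 * ((2 * d).choose d) ^ m))^2 ≤ (4 ^ (d * m))^2 := by
    have e1 : (8 * n * ((n.choose d) ^ 2 * ((2 * d).choose d) ^ m))^2
        = (64 * n^2 * (n.choose d)^4) * ((((2*d).choose d)^2) ^ m) := by ring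
    have e2 : ((4:ℕ) ^ (d * m))^2 = (16 ^ d) ^ m := by
      have : (16:ℕ) = 4^2 := by norm_num
      rw [this, ← pow_mul, ← pow_mul, ← pow_mul]
      ring_nf
    rw [e1, e2]
    calc (64 * n^2 * (n.choose d)^4) * ((((2*d).choose d)^2) ^ m)
        ≤ (d+1)^m * ((((2*d).choose d)^2) ^ m) :=
          Nat.mul_le_mul_right _ (dagger d h1 h2)
      _ = ((((2*d).choose d)^2) * (d+1)) ^ m := by rw [mul_pow]; ring
      _ ≤ (16 ^ d) ^ m := by
          apply Nat.pow_le_pow_left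
          rw [hCB]
          exact centralBinom_sq_mul_le d
  exact le_of_pow_le_pow_left₀ (by norm_num) (Nat.zero_le _) hsq

section Main

theorem exists_good (n m : ℕ) (hn : 0 < n)
    (star : ∀ d, 1 ≤ d → 2 * d ≤ n →
      8 * n * ((n.choose d) ^ 2 * ((2 * d).choose d) ^ m) ≤ 4 ^ (d * m)) :
    ∃ F : Fin m → Finset (Fin n), ∀ A B : Finset (Fin n),
      Disjoint A B → A.card = B.card → A.Nonempty →
        ∃ j, (A ∩ F j).card ≠ (B ∩ F j).card := by
  classical
  set patterns : Finset (Finset (Fin n) × Finset (Fin n)) :=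
    (univ ×ˢ univ).filter
      (fun p => Disjoint p.1 p.2 ∧ p.1.card = p.2.card ∧ p.1.Nonempty) with hpat
  set U : Finset (Fin m → Finset (Fin n)) :=
    patterns.biUnion (fun p => univ.filter fun F =>
      ∀ j, (p.1 ∩ F j).card = (p.2 ∩ F j).card) with hU
  clear_value patterns U
  have cardΩ : (univ : Finset (Fin m → Finset (Fin n))).card = 2 ^ (n * m) := by
    rw [card_univ, Fintype.card_fun]
    rw [Fintype.card_finset, Fintype.card_fin, Fintype.card_fin, ← pow_mul]
  have hUcard : U.card < (univ : Finset (Fin m → Finset (Fin n))).card := by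
    rw [cardΩ]
    have hIcc : (Finset.Icc 1 (n / 2)).card ≤ n := by
      rw [Nat.card_Icc]; omega
    have step1 : U.card ≤ ∑ p ∈ patterns,
        (univ.filter fun F : Fin m → Finset (Fin n) =>
          ∀ j, (p.1 ∩ F j).card = (p.2 ∩ F j).card).card := hU ▸ card_biUnion_le
    have step2 : ∑ p ∈ patterns,
        (univ.filter fun F : Fin m → Finset (Fin n) =>
          ∀ j, (p.1 ∩ F j).card = (p.2 ∩ F j).card).card ≤
        ∑ p ∈ patterns, ((2 * p.1.card).choose p.1.card * 2 ^ (n - 2 * p.1.card)) ^ m := by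
      apply Finset.sum_le_sum
      intro p hp
      rw [hpat, mem_filter] at hp
      exact count_badF p.1 p.2 hp.2.1 hp.2.2.1
    have hmaps : ∀ p ∈ patterns, p.1.card ∈ Finset.Icc 1 (n / 2) := by
      clear step1 step2
      intro p hp
      rw [hpat, mem_filter] at hp
      obtain ⟨-, hdisj, hcard, hne⟩ := hp
      rw [mem_Icc]
      refine ⟨card_pos.mpr hne, ?_⟩
      have h2 : p.1.card + p.2.card ≤ n := by
        rw [← card_union_of_disjoint hdisj]
        simpa [card_univ] using card_le_card (subset_univ (p.1 ∪ p.2))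
      omega
    have step3 : ∑ p ∈ patterns, ((2 * p.1.card).choose p.1.card * 2 ^ (n - 2 * p.1.card)) ^ m
        = ∑ d ∈ Finset.Icc 1 (n / 2), ∑ p ∈ patterns.filter (fun p => p.1.card = d),
            ((2 * p.1.card).choose p.1.card * 2 ^ (n - 2 * p.1.card)) ^ m :=
      (Finset.sum_fiberwise_of_maps_to hmaps _).symm
    have step4 : ∀ d ∈ Finset.Icc 1 (n / 2),
        8 * n * ∑ p ∈ patterns.filter (fun p => p.1.card = d),
            ((2 * p.1.card).choose p.1.card * 2 ^ (n - 2 * p.1.card)) ^ m ≤ 2 ^ (n * m) := by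
      clear step1 step2 step3
      intro d hd
      rw [mem_Icc] at hd
      have h2d : 2 * d ≤ n := by omega
      have inner_eq := Finset.sum_congr (rfl : patterns.filter (fun p => p.1.card = d)
          = patterns.filter (fun p => p.1.card = d))
        (fun p hp => by
          rw [(mem_filter.mp hp).2] :
          ∀ p ∈ patterns.filter (fun p => p.1.card = d),
            ((2 * p.1.card).choose p.1.card * 2 ^ (n - 2 * p.1.card)) ^ m
            = ((2 * d).choose d * 2 ^ (n - 2 * d)) ^ m)
      rw [inner_eq, Finset.sum_const, smul_eq_mul]
      have hcount : (patterns.filter (fun p => p.1.card = d)).card ≤ n.choose d * n.choose d := by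
        have hsub : patterns.filter (fun p => p.1.card = d) ⊆
            (univ : Finset (Fin n)).powersetCard d ×ˢ (univ : Finset (Fin n)).powersetCard d := by
          intro p hp
          rw [mem_filter, hpat, mem_filter] at hp
          obtain ⟨⟨-, -, hcard, -⟩, hpd⟩ := hp
          rw [mem_product, mem_powersetCard, mem_powersetCard]
          exact ⟨⟨subset_univ _, hpd⟩, ⟨subset_univ _, by rw [← hcard, hpd]⟩⟩
        calc (patterns.filter (fun p => p.1.card = d)).card
            ≤ _ := card_le_card hsub
          _ = n.choose d * n.choose d := by
              simp [card_powersetCard, card_univ]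
      calc 8 * n * ((patterns.filter (fun p => p.1.card = d)).card
              * ((2 * d).choose d * 2 ^ (n - 2 * d)) ^ m)
          ≤ 8 * n * ((n.choose d * n.choose d) * ((2 * d).choose d * 2 ^ (n - 2 * d)) ^ m) := by
            exact Nat.mul_le_mul_left _ (Nat.mul_le_mul_right _ hcount)
        _ = (8 * n * ((n.choose d) ^ 2 * ((2 * d).choose d) ^ m)) * (2 ^ (n - 2 * d)) ^ m := by
            rw [mul_pow]; ring
        _ ≤ 4 ^ (d * m) * (2 ^ (n - 2 * d)) ^ m :=
            Nat.mul_le_mul_right _ (star d hd.1 h2d)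
        _ = 2 ^ (n * m) := by
            rw [← pow_mul]
            have h4 : (4 : ℕ) = 2 ^ 2 := by norm_num
            rw [h4, ← pow_mul, ← pow_add]
            congr 1
            obtain ⟨k, hk⟩ := Nat.le.dest h2d
            rw [← hk]
            have hstep : 2 * d + k - 2 * d = k := by omega
            rw [hstep]
            ring
    -- combine
    have hS : 8 * n * U.card ≤ n * 2 ^ (n * m) := by
      calc 8 * n * U.card ≤ 8 * n * ∑ d ∈ Finset.Icc 1 (n / 2),
            ∑ p ∈ patterns.filter (fun p => p.1.card = d),
              ((2 * p.1.card).choose p.1.card * 2 ^ (n - 2 * p.1.card)) ^ m := by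
            apply Nat.mul_le_mul_left
            rw [← step3]
            exact step1.trans step2
        _ = ∑ d ∈ Finset.Icc 1 (n / 2), 8 * n *
            ∑ p ∈ patterns.filter (fun p => p.1.card = d),
              ((2 * p.1.card).choose p.1.card * 2 ^ (n - 2 * p.1.card)) ^ m := Finset.mul_sum _ _ _
        _ ≤ ∑ _d ∈ Finset.Icc 1 (n / 2), 2 ^ (n * m) := Finset.sum_le_sum step4
        _ = (Finset.Icc 1 (n / 2)).card * 2 ^ (n * m) := by rw [Finset.sum_const, smul_eq_mul]
        _ ≤ n * 2 ^ (n * m) := Nat.mul_le_mul_right _ hIcc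
    clear step1 step2 step3 step4
    have h8 : 8 * U.card ≤ 2 ^ (n * m) := by
      have := hS
      have h' : n * (8 * U.card) ≤ n * 2 ^ (n * m) := by ring_nf; ring_nf at this; omega
      exact Nat.le_of_mul_le_mul_left h' hn
    have hpow : 0 < 2 ^ (n * m) := Nat.pow_pos (by norm_num)
    omega
  by_contra hcon
  push_neg at hcon
  have hsub : (univ : Finset (Fin m → Finset (Fin n))) ⊆ U := by
    intro F _
    obtain ⟨A, B, hdisj, hcard, hne, hall⟩ := hcon F
    rw [hU, mem_biUnion]
    refine ⟨(A, B), ?_, ?_⟩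
    · rw [hpat, mem_filter]
      exact ⟨mem_product.mpr ⟨mem_univ _, mem_univ _⟩, hdisj, hcard, hne⟩
    · rw [mem_filter]
      exact ⟨mem_univ _, hall⟩
  exact absurd (card_le_card hsub) (not_le.mpr hUcard)

end Main

lemma card_inter_split {α : Type*} [DecidableEq α] (a b r : Finset α) :
    (a ∩ r).card = ((a ∩ b) ∩ r).card + ((a \ b) ∩ r).card := by
  have h1 : (a ∩ b) ∩ r ∪ (a \ b) ∩ r = a ∩ r := by
    rw [← union_inter_distrib_right]
    congr 1
    ext x
    simp only [mem_union, mem_inter, mem_sdiff]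
    by_cases hb : x ∈ b <;> simp [hb]
  have h2 : Disjoint ((a ∩ b) ∩ r) ((a \ b) ∩ r) := by
    apply Disjoint.mono inter_subset_left inter_subset_left
    exact disjoint_sdiff_inter a b |>.symm
  rw [← h1, card_union_of_disjoint h2]

theorem metricDim_le_of_good {n m : ℕ} (F : Fin m → Finset (Fin n))
    (hF : ∀ A B : Finset (Fin n), Disjoint A B → A.card = B.card → A.Nonempty →
      ∃ j, (A ∩ F j).card ≠ (B ∩ F j).card) :
    metricDim n ≤ m + 1 := by
  classical
  set R : Finset (Finset (Fin n)) := insert univ (Finset.image F univ) with hR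
  have hresolve : ∀ a b : Finset (Fin n), a ≠ b → ∃ r ∈ R, jac a r ≠ jac b r := by
    intro a b hab
    by_cases hc : a.card = b.card
    · have hA : Disjoint (a \ b) (b \ a) := disjoint_sdiff_sdiff
      have hcards : (a \ b).card = (b \ a).card := by
        have h1 : (a \ b).card + (a ∩ b).card = a.card := card_sdiff_add_card_inter a b
        have h2 : (b \ a).card + (b ∩ a).card = b.card := card_sdiff_add_card_inter b a
        rw [inter_comm] at h2
        omega
      have hne : (a \ b).Nonempty := by
        rw [nonempty_iff_ne_empty]
        intro hemp
        apply hab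
        have hsub : a ⊆ b := sdiff_eq_empty_iff_subset.mp hemp
        exact eq_of_subset_of_card_le hsub (le_of_eq hc.symm)
      obtain ⟨j, hj⟩ := hF (a \ b) (b \ a) hA hcards hne
      refine ⟨F j, ?_, ?_⟩
      · exact mem_insert_of_mem (mem_image_of_mem F (mem_univ j))
      · apply jac_ne_of_inter_ne hc
        have e1 := card_inter_split a b (F j)
        have e2 := card_inter_split b a (F j)
        rw [inter_comm b a] at e2
        omega
    · exact ⟨univ, mem_insert_self _ _, jac_univ_ne hc⟩
  have hmem : R.card ∈ {m : ℕ | ∃ R' : Finset (Finset (Fin n)), R'.card = m ∧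
      ∀ a b : Finset (Fin n), a ≠ b → ∃ r ∈ R', jac a r ≠ jac b r} :=
    ⟨R, rfl, hresolve⟩
  have h1 : metricDim n ≤ R.card := Nat.sInf_le hmem
  have h2 : R.card ≤ m + 1 := by
    calc R.card ≤ (Finset.image F univ).card + 1 := card_insert_le _ _
      _ ≤ m + 1 := by
          have := card_image_le (s := (univ : Finset (Fin m))) (f := F)
          rw [card_univ, Fintype.card_fin] at this
          omega
  omega

noncomputable def mfun (n : ℕ) : ℕ :=
  2 + (⌈2 * Real.log (2 * Real.exp 1) * (n : ℝ) / Real.log ((n : ℝ) / 2)⌉).toNat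

noncomputable def Dfun (n : ℕ) : ℕ := ⌈(n : ℝ) ^ ((9:ℝ)/10)⌉₊

lemma log_two_e : Real.log (2 * Real.exp 1) = Real.log 2 + 1 := by
  rw [Real.log_mul two_ne_zero (Real.exp_ne_zero 1), Real.log_exp]

lemma log_two_e_pos : 0 < Real.log (2 * Real.exp 1) := by
  rw [log_two_e]; positivity

lemma mu_pos {n : ℕ} (hn : 3 ≤ n) :
    0 < 2 * Real.log (2 * Real.exp 1) * (n : ℝ) / Real.log ((n : ℝ) / 2) := by
  apply div_pos
  · have h0 : (0:ℝ) < n := by positivity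
    have h1 := log_two_e_pos
    positivity
  · apply Real.log_pos
    have : (3:ℝ) ≤ (n:ℝ) := by exact_mod_cast hn
    linarith

lemma mfun_ge {n : ℕ} (hn : 3 ≤ n) :
    2 * Real.log (2 * Real.exp 1) * (n : ℝ) / Real.log ((n : ℝ) / 2) ≤ (mfun n : ℝ) := by
  have h1 := mu_pos hn
  set x := 2 * Real.log (2 * Real.exp 1) * (n : ℝ) / Real.log ((n : ℝ) / 2)
  have h2 : (0:ℤ) ≤ ⌈x⌉ := Int.ceil_nonneg h1.le
  have : ((mfun n : ℕ) : ℝ) = 2 + ((⌈x⌉.toNat : ℤ) : ℝ) := by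
    rw [mfun]; push_cast; norm_num; rfl
  rw [this, Int.toNat_of_nonneg h2]
  have := Int.le_ceil x
  linarith

-- eventual inequality 1
lemma ev1 : ∀ᶠ x : ℝ in atTop,
    Real.log 64 * Real.log x + 4 * x ^ ((9:ℝ)/10) * (Real.log x)^2 + 6 * (Real.log x)^2
      ≤ (2 * Real.log (2 * Real.exp 1) * Real.log 2) * x := by
  have c_pos : 0 < 2 * Real.log (2 * Real.exp 1) * Real.log 2 := by
    have := log_two_e_pos
    have h2 : 0 < Real.log 2 := Real.log_pos (by norm_num)
    positivity
  have h1 : (fun x : ℝ => Real.log 64 * Real.log x) =o[atTop] (fun x : ℝ => x) :=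
    (Real.isLittleO_log_id_atTop).const_mul_left _
  have hsq : (fun x : ℝ => (Real.log x)^2) =o[atTop] (fun x : ℝ => x) := by
    have ha := isLittleO_log_rpow_rpow_atTop 2 (one_pos)
    refine ha.congr' ?_ ?_
    · filter_upwards [Real.tendsto_log_atTop.eventually_ge_atTop 0] with x hx
      rw [Real.rpow_two]
    · filter_upwards [eventually_gt_atTop 0] with x hx
      exact Real.rpow_one x
  have h3 : (fun x : ℝ => 6 * (Real.log x)^2) =o[atTop] (fun x : ℝ => x) :=
    hsq.const_mul_left _
  have h2 : (fun x : ℝ => 4 * x ^ ((9:ℝ)/10) * (Real.log x)^2) =o[atTop] (fun x : ℝ => x) := by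
    have hb := isLittleO_log_rpow_rpow_atTop 2 (show (0:ℝ) < 1/10 by norm_num)
    have hb' : (fun x : ℝ => (Real.log x)^2) =o[atTop] (fun x : ℝ => x ^ ((1:ℝ)/10)) := by
      refine hb.congr' ?_ (by filter_upwards with x; rfl)
      filter_upwards [Real.tendsto_log_atTop.eventually_ge_atTop 0] with x hx
      rw [Real.rpow_two]
    have hc : (fun x : ℝ => x ^ ((9:ℝ)/10)) =O[atTop] (fun x : ℝ => x ^ ((9:ℝ)/10)) :=
      isBigO_refl _ _
    have hd := hc.mul_isLittleO hb'
    have he : (fun x : ℝ => x ^ ((9:ℝ)/10) * x ^ ((1:ℝ)/10)) =ᶠ[atTop] (fun x : ℝ => x) := by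
      filter_upwards [eventually_gt_atTop 0] with x hx
      rw [← Real.rpow_add hx]
      norm_num
    have hf := hd.congr' (EventuallyEq.refl _ _) he
    have hg := hf.const_mul_left 4
    refine hg.congr' ?_ (EventuallyEq.refl _ _)
    filter_upwards with x
    ring
  have hsum := (h1.add h2).add h3
  have := hsum.def c_pos
  filter_upwards [this, eventually_ge_atTop (0:ℝ)] with x hx hx0
  have := le_trans (le_abs_self _) hx
  simpa [abs_of_nonneg hx0, Real.norm_eq_abs] using this

-- eventual inequality 2
lemma ev2 : ∀ᶠ x : ℝ in atTop,
    Real.log 64 + 2 * Real.log x + 4 * Real.log 2 * x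
      ≤ (9/5) * Real.log (2 * Real.exp 1) * x := by
  have c2 : 0 < (9/5) * Real.log (2 * Real.exp 1) - 4 * Real.log 2 := by
    rw [log_two_e]
    have := Real.log_two_lt_d9
    nlinarith
  have h1 : (fun x : ℝ => Real.log 64 + 2 * Real.log x) =o[atTop] (fun x : ℝ => x) := by
    have ha : (fun _ : ℝ => Real.log 64) =o[atTop] (fun x : ℝ => x) :=
      isLittleO_const_id_atTop _
    exact ha.add ((Real.isLittleO_log_id_atTop).const_mul_left 2)
  have := h1.def c2
  filter_upwards [this, eventually_ge_atTop (0:ℝ)] with x hx hx0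
  have h2 := le_trans (le_abs_self _) hx
  rw [Real.norm_eq_abs, abs_of_nonneg hx0] at h2
  nlinarith

lemma dagger_ev : ∀ᶠ n : ℕ in atTop, ∀ d, 1 ≤ d → 2 * d ≤ n →
    64 * n^2 * (n.choose d)^4 ≤ (d+1)^(mfun n) := by
  have hcast : Tendsto (Nat.cast : ℕ → ℝ) atTop atTop := tendsto_natCast_atTop_atTop
  filter_upwards [hcast.eventually ev1, hcast.eventually ev2, eventually_ge_atTop 3]
    with n h1 h2 hn3
  intro d hd1 hd2
  have hN3 : (3:ℝ) ≤ (n:ℝ) := by exact_mod_cast hn3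
  have hNpos : (0:ℝ) < (n:ℝ) := by linarith
  have hlogN : 0 < Real.log n := Real.log_pos (by linarith)
  have hloghalf : 0 < Real.log ((n:ℝ)/2) := Real.log_pos (by linarith)
  have hlog_le : Real.log ((n:ℝ)/2) ≤ Real.log n :=
    Real.log_le_log (by linarith) (by linarith)
  have hm := mfun_ge hn3
  have hmu := mu_pos hn3
  have hmnn : (0:ℝ) ≤ (mfun n : ℝ) := by positivity
  have hlog2 : 0 < Real.log 2 := Real.log_pos (by norm_num)
  have hrpow_nonneg : (0:ℝ) ≤ (n:ℝ) ^ ((9:ℝ)/10) := Real.rpow_nonneg hNpos.le _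
  have hrpow_one_le : (1:ℝ) ≤ (n:ℝ) ^ ((9:ℝ)/10) :=
    Real.one_le_rpow (by linarith) (by norm_num)
  by_cases hcase : d ≤ Dfun n
  · -- small d
    have key : 64 * n ^ (4 * Dfun n + 2) ≤ 2 ^ (mfun n) := by
      have goalR : (64:ℝ) * (n:ℝ) ^ (4 * Dfun n + 2) ≤ (2:ℝ) ^ (mfun n) := by
        have hlhs_pos : (0:ℝ) < 64 * (n:ℝ) ^ (4 * Dfun n + 2) := by positivity
        have hrhs_pos : (0:ℝ) < (2:ℝ) ^ (mfun n) := by positivity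
        rw [← Real.log_le_log_iff hlhs_pos hrhs_pos]
        rw [Real.log_mul (by norm_num) (by positivity), Real.log_pow, Real.log_pow]
        have hD : ((Dfun n : ℕ) : ℝ) < (n:ℝ) ^ ((9:ℝ)/10) + 1 :=
          Nat.ceil_lt_add_one hrpow_nonneg
        have hK : ((4 * Dfun n + 2 : ℕ) : ℝ) ≤ 4 * (n:ℝ) ^ ((9:ℝ)/10) + 6 := by
          push_cast
          linarith
        have step1 : ((4 * Dfun n + 2 : ℕ) : ℝ) * Real.log n
            ≤ (4 * (n:ℝ) ^ ((9:ℝ)/10) + 6) * Real.log n :=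
          mul_le_mul_of_nonneg_right hK hlogN.le
        have step2 : Real.log 64 + (4 * (n:ℝ) ^ ((9:ℝ)/10) + 6) * Real.log n
            ≤ 2 * Real.log (2 * Real.exp 1) * (n:ℝ) / Real.log ((n:ℝ)/2) * Real.log 2 := by
          rw [div_mul_eq_mul_div, le_div_iff₀ hloghalf]
          have hfac : (0:ℝ) ≤ Real.log 64 + (4 * (n:ℝ) ^ ((9:ℝ)/10) + 6) * Real.log n := by
            have h64 : (0:ℝ) < Real.log 64 := Real.log_pos (by norm_num)
            have : (0:ℝ) ≤ (4 * (n:ℝ) ^ ((9:ℝ)/10) + 6) * Real.log n := by positivity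
            linarith
          calc (Real.log 64 + (4 * (n:ℝ) ^ ((9:ℝ)/10) + 6) * Real.log n) * Real.log ((n:ℝ)/2)
              ≤ (Real.log 64 + (4 * (n:ℝ) ^ ((9:ℝ)/10) + 6) * Real.log n) * Real.log n :=
                mul_le_mul_of_nonneg_left hlog_le hfac
            _ = Real.log 64 * Real.log n + 4 * (n:ℝ) ^ ((9:ℝ)/10) * (Real.log n)^2
                + 6 * (Real.log n)^2 := by ring
            _ ≤ 2 * Real.log (2 * Real.exp 1) * Real.log 2 * (n:ℝ) := h1
            _ = 2 * Real.log (2 * Real.exp 1) * (n:ℝ) * Real.log 2 := by ring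
        have step3 : 2 * Real.log (2 * Real.exp 1) * (n:ℝ) / Real.log ((n:ℝ)/2) * Real.log 2
            ≤ (mfun n : ℝ) * Real.log 2 := mul_le_mul_of_nonneg_right hm hlog2.le
        linarith
      exact_mod_cast goalR
    calc 64 * n^2 * (n.choose d)^4
        ≤ 64 * n^2 * (n^d)^4 := by
          apply Nat.mul_le_mul_left
          exact Nat.pow_le_pow_left (Nat.choose_le_pow n d) 4
      _ = 64 * n ^ (4 * d + 2) := by ring
      _ ≤ 64 * n ^ (4 * Dfun n + 2) := by
          apply Nat.mul_le_mul_left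
          apply Nat.pow_le_pow_right (by omega)
          omega
      _ ≤ 2 ^ (mfun n) := key
      _ ≤ (d+1) ^ (mfun n) := Nat.pow_le_pow_left (by omega) _
  · -- large d
    push_neg at hcase
    have key : 64 * n^2 * 2 ^ (4*n) ≤ (Dfun n + 2) ^ (mfun n) := by
      have goalR : (64:ℝ) * (n:ℝ)^2 * (2:ℝ) ^ (4*n) ≤ ((Dfun n + 2 : ℕ) : ℝ) ^ (mfun n) := by
        have hlhs_pos : (0:ℝ) < 64 * (n:ℝ)^2 * (2:ℝ) ^ (4*n) := by positivity
        have hD2pos : (0:ℝ) < ((Dfun n + 2 : ℕ) : ℝ) := by positivity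
        have hrhs_pos : (0:ℝ) < ((Dfun n + 2 : ℕ) : ℝ) ^ (mfun n) := by positivity
        rw [← Real.log_le_log_iff hlhs_pos hrhs_pos]
        rw [Real.log_mul (by positivity) (by positivity),
          Real.log_mul (by norm_num) (by positivity), Real.log_pow, Real.log_pow, Real.log_pow]
        have hDge : (n:ℝ) ^ ((9:ℝ)/10) ≤ ((Dfun n + 2 : ℕ) : ℝ) := by
          have h0 : (n:ℝ) ^ ((9:ℝ)/10) ≤ ((Dfun n : ℕ) : ℝ) := by
            simp only [Dfun]
            exact Nat.le_ceil _
          push_cast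
          push_cast at h0
          linarith
        have hlogD : (9/10) * Real.log n ≤ Real.log ((Dfun n + 2 : ℕ) : ℝ) := by
          have h' : Real.log ((n:ℝ) ^ ((9:ℝ)/10)) ≤ Real.log ((Dfun n + 2 : ℕ) : ℝ) :=
            Real.log_le_log (by positivity) hDge
          rw [Real.log_rpow hNpos] at h'
          linarith
        have hmul : 2 * Real.log (2 * Real.exp 1) * (n:ℝ) / Real.log ((n:ℝ)/2)
              * ((9/10) * Real.log n) ≤ (mfun n : ℝ) * Real.log ((Dfun n + 2 : ℕ) : ℝ) := by
          apply mul_le_mul hm hlogD (by positivity) hmnn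
        have hratio : (9/5) * Real.log (2 * Real.exp 1) * (n:ℝ)
            ≤ 2 * Real.log (2 * Real.exp 1) * (n:ℝ) / Real.log ((n:ℝ)/2)
              * ((9/10) * Real.log n) := by
          rw [div_mul_eq_mul_div (2 * Real.log (2 * Real.exp 1) * (n:ℝ))
            (Real.log ((n:ℝ)/2)) ((9/10) * Real.log n), le_div_iff₀ hloghalf]
          have hpos : (0:ℝ) ≤ (9/5) * Real.log (2 * Real.exp 1) * (n:ℝ) := by
            have := log_two_e_pos
            positivity
          calc (9/5) * Real.log (2 * Real.exp 1) * (n:ℝ) * Real.log ((n:ℝ)/2)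
              ≤ (9/5) * Real.log (2 * Real.exp 1) * (n:ℝ) * Real.log n :=
                mul_le_mul_of_nonneg_left hlog_le hpos
            _ = 2 * Real.log (2 * Real.exp 1) * (n:ℝ) * ((9/10) * Real.log n) := by ring
        have hlhs : Real.log 64 + 2 * Real.log n + ((4*n : ℕ) : ℝ) * Real.log 2
            ≤ (9/5) * Real.log (2 * Real.exp 1) * (n:ℝ) := by
          have : ((4*n : ℕ) : ℝ) * Real.log 2 = 4 * Real.log 2 * (n:ℝ) := by
            push_cast; ring
          rw [this]
          exact h2
        push_cast at hmul hlogD hlhs ⊢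
        linarith
      exact_mod_cast goalR
    calc 64 * n^2 * (n.choose d)^4
        ≤ 64 * n^2 * (2^n)^4 := by
          apply Nat.mul_le_mul_left
          exact Nat.pow_le_pow_left (choose_le_two_pow_all n d) 4
      _ = 64 * n^2 * 2 ^ (4*n) := by rw [← pow_mul]; ring_nf
      _ ≤ (Dfun n + 2) ^ (mfun n) := key
      _ ≤ (d+1) ^ (mfun n) := Nat.pow_le_pow_left (by omega) _

/-- For all large `n`, `β(2^{Fin n}, Jac) ≤ 3 + ⌈2 ln(2e) n / ln(n/2)⌉`. -/
theorem stmt16 :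
    ∃ N : ℕ, ∀ n : ℕ, N ≤ n →
      (metricDim n : ℝ) ≤
        3 + ((⌈2 * Real.log (2 * Real.exp 1) * (n : ℝ) / Real.log ((n : ℝ) / 2)⌉ : ℤ) : ℝ) := by
  obtain ⟨N, hN⟩ := eventually_atTop.mp (dagger_ev.and (eventually_ge_atTop 3))
  refine ⟨N, fun n hn => ?_⟩
  obtain ⟨hdag, hn3⟩ := hN n hn
  obtain ⟨F, hF⟩ := exists_good n (mfun n) (by omega) (star_of_dagger hdag)
  have hdim : metricDim n ≤ mfun n + 1 := metricDim_le_of_good F hF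
  have hceil : (0:ℤ) ≤ ⌈2 * Real.log (2 * Real.exp 1) * (n : ℝ) / Real.log ((n : ℝ) / 2)⌉ :=
    Int.ceil_nonneg (mu_pos hn3).le
  have h2 : (((⌈2 * Real.log (2 * Real.exp 1) * (n : ℝ) / Real.log ((n : ℝ) / 2)⌉).toNat : ℕ) : ℝ)
      = ((⌈2 * Real.log (2 * Real.exp 1) * (n : ℝ) / Real.log ((n : ℝ) / 2)⌉ : ℤ) : ℝ) := by
    exact_mod_cast congrArg (Int.cast : ℤ → ℝ) (Int.toNat_of_nonneg hceil)
  have : ((mfun n + 1 : ℕ) : ℝ)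
      = 3 + ((⌈2 * Real.log (2 * Real.exp 1) * (n : ℝ) / Real.log ((n : ℝ) / 2)⌉ : ℤ) : ℝ) := by
    rw [mfun]
    rw [Nat.cast_add, Nat.cast_add, h2]
    norm_num
    ring
  calc (metricDim n : ℝ) ≤ ((mfun n + 1 : ℕ) : ℝ) := by exact_mod_cast hdim
    _ = _ := this
end

section
/- There exist constants 0 < c ≤ C and N such that for all n ≥ N, the metric dimension β(2^{Fin n}, Jac) satisfies c·n/ln(n) ≤ β(2^{Fin n}, Jac) ≤ C·n/ln(n); i.e., β(2^{Fin n}, Jac) = Θ(n/ln n) as n → ∞. -/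
open Finset


lemma aux_distinct_powers {ι : Type*} [DecidableEq ι] (s : Finset ι) (d : ι → ℤ) (f : ι → ℕ)
    (hinj : Set.InjOn f s) (hd : ∀ i ∈ s, d i = 1 ∨ d i = -1)
    (h : ∑ i ∈ s, d i * 2 ^ f i = 0) : s = ∅ := by
  by_contra hne
  obtain ⟨i₀, hi₀, hmin⟩ := s.exists_min_image f (nonempty_of_ne_empty hne)
  have hsum := Finset.add_sum_erase s (fun i => d i * 2 ^ f i) hi₀
  have hsplit : ∑ i ∈ s.erase i₀, d i * 2 ^ f i = - (d i₀ * 2 ^ f i₀) := by linarith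
  have hdvd : (2 : ℤ) ^ (f i₀ + 1) ∣ ∑ i ∈ s.erase i₀, d i * 2 ^ f i := by
    refine Finset.dvd_sum ?_
    intro i hi
    have his : i ∈ s := Finset.mem_of_mem_erase hi
    have hne' : i ≠ i₀ := Finset.ne_of_mem_erase hi
    have h1 : f i₀ ≤ f i := hmin i his
    have h2 : f i ≠ f i₀ := fun hc => hne' (hinj his hi₀ hc)
    have h3 : f i₀ + 1 ≤ f i := by omega
    exact Dvd.dvd.mul_left (pow_dvd_pow 2 h3) (d i)
  rw [hsplit] at hdvd
  have hdvd2 : (2:ℤ) ^ (f i₀ + 1) ∣ d i₀ * 2 ^ f i₀ := (dvd_neg).mp hdvd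
  have habs : |d i₀ * 2 ^ f i₀| = 2 ^ f i₀ := by
    rcases hd i₀ hi₀ with h | h <;> rw [h] <;> simp [abs_of_nonneg, pow_nonneg]
  have hx : d i₀ * 2 ^ f i₀ ≠ 0 := by
    intro hc; rw [hc] at habs; simp at habs
    exact absurd habs.symm (by positivity)
  have hdvd3 : (2:ℤ) ^ (f i₀ + 1) ∣ |d i₀ * 2 ^ f i₀| := (dvd_abs _ _).mpr hdvd2
  have hle := Int.le_of_dvd (abs_pos.mpr hx) hdvd3
  rw [habs] at hle
  have : (2:ℤ) ^ f i₀ < 2 ^ (f i₀ + 1) := by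
    have : (2:ℤ) ^ f i₀ * 1 < 2 ^ f i₀ * 2 := by
      have : (0:ℤ) < 2 ^ f i₀ := by positivity
      linarith
    rw [pow_succ]; linarith
  linarith

lemma aux_sign_sum {k : ℕ} (P D : Finset (Fin k)) :
    ∑ w ∈ D.powerset, (-1 : ℤ) ^ (P ∩ w).card
      = if P ∩ D = ∅ then 2 ^ D.card else 0 := by
  have hprod := Finset.prod_add (fun i => if i ∈ P then (-1 : ℤ) else 1) (fun _ => (1:ℤ)) D
  have hrhs : ∀ t ∈ D.powerset,
      (∏ i ∈ t, (if i ∈ P then (-1:ℤ) else 1)) * (∏ _i ∈ D \ t, (1:ℤ))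
        = (-1 : ℤ) ^ (P ∩ t).card := by
    intro t _
    rw [Finset.prod_const_one, mul_one, Finset.prod_ite (fun _ => (-1:ℤ)) (fun _ => (1:ℤ))]
    rw [Finset.prod_const, Finset.prod_const_one, mul_one, Finset.filter_mem_eq_inter,
      Finset.inter_comm]
  rw [Finset.sum_congr rfl hrhs] at hprod
  rw [← hprod]
  have hlhs : ∀ i ∈ D, ((if i ∈ P then (-1:ℤ) else 1) + 1) = (if i ∈ P then 0 else 2) := by
    intro i _; split <;> ring
  rw [Finset.prod_congr rfl hlhs, Finset.prod_ite (fun _ => (0:ℤ)) (fun _ => (2:ℤ)),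
    Finset.prod_const, Finset.prod_const, Finset.filter_mem_eq_inter, Finset.inter_comm]
  by_cases h : P ∩ D = ∅
  · rw [h, if_pos rfl]
    simp only [card_empty, pow_zero, one_mul]
    congr 1
    · congr 1
      apply Finset.filter_true_of_mem
      intro i hiD hiP
      exact (Finset.eq_empty_iff_forall_notMem.mp h i) (Finset.mem_inter.mpr ⟨hiP, hiD⟩)
  · rw [if_neg h]
    have : 0 < (P ∩ D).card := Nat.pos_of_ne_zero (by simpa [← Finset.card_eq_zero] using h)
    rw [zero_pow (by omega)]
    ring

lemma aux_symmDiff_card {α : Type*} [DecidableEq α] (X Y : Finset α) :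
    (symmDiff X Y).card + 2 * (X ∩ Y).card = X.card + Y.card := by
  rw [symmDiff_def]
  have hdisj : Disjoint (X \ Y) (Y \ X) := disjoint_sdiff_sdiff
  have h1 : (X ∩ Y).card + (X \ Y).card = X.card := Finset.card_inter_add_card_sdiff X Y
  have h2 : (Y ∩ X).card + (Y \ X).card = Y.card := Finset.card_inter_add_card_sdiff Y X
  have h3 : (X ⊔ Y \ X : Finset α) = X ∪ Y \ X := rfl
  have hcard := Finset.card_union_of_disjoint hdisj
  rw [Finset.inter_comm Y X] at h2
  have : ((X \ Y) ⊔ (Y \ X) : Finset α).card = (X \ Y).card + (Y \ X).card := hcard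
  omega

lemma aux_neg_one_pow {α : Type*} [DecidableEq α] (X Y : Finset α) :
    (-1 : ℤ) ^ X.card * (-1) ^ Y.card = (-1) ^ (symmDiff X Y).card := by
  rw [← pow_add]
  have h := aux_symmDiff_card X Y
  have : X.card + Y.card = (symmDiff X Y).card + 2 * (X ∩ Y).card := h.symm
  rw [this, pow_add, pow_mul]
  norm_num

lemma aux_inter_symmDiff {α : Type*} [DecidableEq α] (X Y w : Finset α) :
    symmDiff (X ∩ w) (Y ∩ w) = (symmDiff X Y) ∩ w := by
  ext x
  simp only [Finset.mem_symmDiff, Finset.mem_inter]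
  tauto

lemma aux_count {n : ℕ} (a Q : Finset (Fin n)) :
    ∑ e : Fin n, (if e ∈ a then (1:ℤ) else 0) * (if e ∈ Q then 1 else 0)
      = ((a ∩ Q).card : ℤ) := by
  have h1 : ∀ e : Fin n, (if e ∈ a then (1:ℤ) else 0) * (if e ∈ Q then 1 else 0)
      = if e ∈ a ∩ Q then 1 else 0 := by
    intro e
    by_cases ha : e ∈ a <;> by_cases hq : e ∈ Q <;>
      simp [ha, hq, Finset.mem_inter]
  rw [Finset.sum_congr rfl (fun e _ => h1 e), Finset.sum_boole]
  congr 1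
  rw [Finset.filter_mem_eq_inter, Finset.univ_inter]

section Core

variable {k n : ℕ} (um : Fin n → Finset (Fin k)) (jm : Fin n → Fin k)

/-- The query set associated to a row `w ⊆ Fin k`. -/
def Qset (w : Finset (Fin k)) : Finset (Fin n) :=
  univ.filter (fun e => ((um e).filter (fun t => jm e < t)) ∩ w = ∅ ∧ (um e ∩ w).card % 2 = 0)

/-- Evaluation of the character-weighted count of a single column. -/
lemma aux_G_eval (ustar : Finset (Fin k)) (e : Fin n) :
    2 * (∑ w : Finset (Fin k),
        (if e ∈ Qset um jm w then (-1:ℤ) ^ ((ustar ∩ w).card) else 0))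
      = (if ustar ∩ (univ \ ((um e).filter (fun t => jm e < t))) = ∅
          then 2 ^ ((univ \ ((um e).filter (fun t => jm e < t))).card : ℕ) else 0)
        + (if (symmDiff ustar (um e)) ∩ (univ \ ((um e).filter (fun t => jm e < t))) = ∅
          then 2 ^ ((univ \ ((um e).filter (fun t => jm e < t))).card : ℕ) else 0) := by
  set B := (um e).filter (fun t => jm e < t) with hB
  set De := (univ : Finset (Fin k)) \ B with hDe
  -- rewrite the sum as a sum over the filtered powerset
  have hset : (univ : Finset (Finset (Fin k))).filter (fun w => e ∈ Qset um jm w)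
      = De.powerset.filter (fun w => (um e ∩ w).card % 2 = 0) := by
    ext w
    simp only [Finset.mem_filter, Finset.mem_univ, true_and, Finset.mem_powerset]
    constructor
    · intro hw
      have hw1 : B ∩ w = ∅ := by
        have := (Finset.mem_filter.mp hw).2
        exact this.1
      have hw2 := (Finset.mem_filter.mp hw).2.2
      refine ⟨?_, hw2⟩
      rw [hDe, Finset.subset_sdiff]
      exact ⟨Finset.subset_univ w, by rwa [Finset.disjoint_iff_inter_eq_empty, Finset.inter_comm]⟩
    · rintro ⟨hw1, hw2⟩
      rw [Qset, Finset.mem_filter]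
      refine ⟨Finset.mem_univ e, ?_, hw2⟩
      rw [hDe, Finset.subset_sdiff] at hw1
      rw [Finset.inter_comm, ← Finset.disjoint_iff_inter_eq_empty]
      exact hw1.2
  have hstep1 : (∑ w : Finset (Fin k),
        (if e ∈ Qset um jm w then (-1:ℤ) ^ ((ustar ∩ w).card) else 0))
      = ∑ w ∈ De.powerset.filter (fun w => (um e ∩ w).card % 2 = 0),
          (-1:ℤ) ^ ((ustar ∩ w).card) := by
    rw [← hset, Finset.sum_filter]
  rw [hstep1]
  -- now: 2 * Σ_{even} χ = Σ_{powerset} (χ + (-1)^{|um∩w|} χ)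
  have hstep2 : ∑ w ∈ De.powerset,
        ((-1:ℤ) ^ ((ustar ∩ w).card) + (-1:ℤ) ^ ((um e ∩ w).card) * (-1:ℤ) ^ ((ustar ∩ w).card))
      = 2 * ∑ w ∈ De.powerset.filter (fun w => (um e ∩ w).card % 2 = 0),
          (-1:ℤ) ^ ((ustar ∩ w).card) := by
    rw [← Finset.sum_filter_add_sum_filter_not De.powerset
      (fun w => (um e ∩ w).card % 2 = 0)]
    have heven : ∀ w ∈ De.powerset.filter (fun w => (um e ∩ w).card % 2 = 0),
        ((-1:ℤ) ^ ((ustar ∩ w).card) + (-1:ℤ) ^ ((um e ∩ w).card) * (-1:ℤ) ^ ((ustar ∩ w).card))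
          = 2 * (-1:ℤ) ^ ((ustar ∩ w).card) := by
      intro w hw
      have : Even ((um e ∩ w).card) := Nat.even_iff.mpr (Finset.mem_filter.mp hw).2
      rw [this.neg_one_pow]
      ring
    have hodd : ∀ w ∈ De.powerset.filter (fun w => ¬ ((um e ∩ w).card % 2 = 0)),
        ((-1:ℤ) ^ ((ustar ∩ w).card) + (-1:ℤ) ^ ((um e ∩ w).card) * (-1:ℤ) ^ ((ustar ∩ w).card))
          = 0 := by
      intro w hw
      have : Odd ((um e ∩ w).card) := by
        have := (Finset.mem_filter.mp hw).2
        rw [Nat.odd_iff]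
        omega
      rw [this.neg_one_pow]
      ring
    rw [Finset.sum_congr rfl heven, Finset.sum_congr rfl hodd, Finset.sum_const_zero, add_zero,
      Finset.mul_sum]
  rw [← hstep2, Finset.sum_add_distrib]
  congr 1
  · exact aux_sign_sum ustar De
  · have hpt : ∀ w ∈ De.powerset,
        (-1:ℤ) ^ ((um e ∩ w).card) * (-1:ℤ) ^ ((ustar ∩ w).card)
          = (-1:ℤ) ^ (((symmDiff ustar (um e)) ∩ w).card) := by
      intro w _
      rw [aux_neg_one_pow, aux_inter_symmDiff, symmDiff_comm]
    rw [Finset.sum_congr rfl hpt]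
    exact aux_sign_sum (symmDiff ustar (um e)) De

end Core
section Core2

variable {k n : ℕ}

lemma core_inj (um : Fin n → Finset (Fin k)) (jm : Fin n → Fin k)
    (hj : ∀ e, jm e ∈ um e)
    (hinj : Function.Injective (fun e => (um e, jm e)))
    (a b : Finset (Fin n))
    (h : ∀ w : Finset (Fin k), (a ∩ Qset um jm w).card = (b ∩ Qset um jm w).card) :
    a = b := by
  by_contra hab
  have hsne : (symmDiff a b).Nonempty := by
    rw [Finset.nonempty_iff_ne_empty]
    intro hc
    exact hab (symmDiff_eq_bot.mp hc)
  obtain ⟨ustar, hUst, hmax⟩ := ((symmDiff a b).image um).exists_maximal (hsne.image um)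
  obtain ⟨estar, hestar, humstar⟩ := Finset.mem_image.mp hUst
  set d : Fin n → ℤ := fun e => (if e ∈ a then 1 else 0) - (if e ∈ b then 1 else 0) with hd
  set G : Fin n → ℤ := fun e => ∑ w : Finset (Fin k),
      (if e ∈ Qset um jm w then (-1:ℤ) ^ ((ustar ∩ w).card) else 0) with hG
  -- step A : total weighted sum is zero
  have hperw : ∀ w : Finset (Fin k),
      ∑ e : Fin n, d e * (if e ∈ Qset um jm w then (1:ℤ) else 0) = 0 := by
    intro w
    have : ∑ e : Fin n, d e * (if e ∈ Qset um jm w then (1:ℤ) else 0)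
        = ((a ∩ Qset um jm w).card : ℤ) - ((b ∩ Qset um jm w).card : ℤ) := by
      rw [← aux_count a (Qset um jm w), ← aux_count b (Qset um jm w), ← Finset.sum_sub_distrib]
      apply Finset.sum_congr rfl
      intro e _
      rw [hd]
      ring
    rw [this, h w]
    ring
  have hzero : ∑ e : Fin n, d e * G e = 0 := by
    have hswap : ∑ e : Fin n, d e * G e
        = ∑ w : Finset (Fin k), ∑ e : Fin n,
            d e * (if e ∈ Qset um jm w then (-1:ℤ) ^ ((ustar ∩ w).card) else 0) := by
      rw [Finset.sum_comm]
      apply Finset.sum_congr rfl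
      intro e _
      rw [hG, Finset.mul_sum]
    rw [hswap]
    have : ∀ w : Finset (Fin k), ∑ e : Fin n,
        d e * (if e ∈ Qset um jm w then (-1:ℤ) ^ ((ustar ∩ w).card) else 0)
        = ((-1:ℤ) ^ ((ustar ∩ w).card)) *
            ∑ e : Fin n, d e * (if e ∈ Qset um jm w then (1:ℤ) else 0) := by
      intro w
      rw [Finset.mul_sum]
      apply Finset.sum_congr rfl
      intro e _
      by_cases he : e ∈ Qset um jm w <;> simp [he] <;> ring
    rw [Finset.sum_congr rfl (fun w _ => this w)]
    apply Finset.sum_eq_zero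
    intro w _
    rw [hperw w]
    ring
  -- step B : evaluate 2 * G e
  have hBsub : ∀ e : Fin n, ((um e).filter (fun t => jm e < t)) ⊆ um e :=
    fun e => Finset.filter_subset _ _
  -- for in-play e with um e ≠ ustar : 2 * G e = 0
  have hGe0 : ∀ e ∈ symmDiff a b, um e ≠ ustar → 2 * G e = 0 := by
    intro e hes hne
    rw [hG]
    rw [aux_G_eval um jm ustar e]
    have hmaxe : ¬ ustar ⊂ um e := fun hss => (Finset.ssubset_iff_subset_ne.mp hss).2 (Finset.Subset.antisymm hss.subset (hmax (Finset.mem_image_of_mem um hes) hss.subset))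
    have h1 : ¬ (ustar ∩ (univ \ ((um e).filter (fun t => jm e < t))) = ∅) := by
      intro hc
      -- then ustar ⊆ B e ⊆ um e, and jm e ∈ um e \ B e so strict
      have hsub : ustar ⊆ (um e).filter (fun t => jm e < t) := by
        intro x hx
        by_contra hxB
        have : x ∈ ustar ∩ (univ \ ((um e).filter (fun t => jm e < t))) :=
          Finset.mem_inter.mpr ⟨hx, Finset.mem_sdiff.mpr ⟨Finset.mem_univ x, hxB⟩⟩
        rw [hc] at this
        exact absurd this (Finset.notMem_empty x)
      have hss : ustar ⊂ um e := by
        refine Finset.ssubset_iff_subset_ne.mpr ⟨hsub.trans (hBsub e), hne.symm⟩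
      exact hmaxe hss
    have h2 : ¬ ((symmDiff ustar (um e)) ∩ (univ \ ((um e).filter (fun t => jm e < t))) = ∅) := by
      intro hc
      have hsub : (symmDiff ustar (um e)) ⊆ (um e).filter (fun t => jm e < t) := by
        intro x hx
        by_contra hxB
        have : x ∈ (symmDiff ustar (um e)) ∩ (univ \ ((um e).filter (fun t => jm e < t))) :=
          Finset.mem_inter.mpr ⟨hx, Finset.mem_sdiff.mpr ⟨Finset.mem_univ x, hxB⟩⟩
        rw [hc] at this
        exact absurd this (Finset.notMem_empty x)
      have hsub2 : ustar ⊆ um e := by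
        intro x hx
        by_contra hxu
        have hxd : x ∈ symmDiff ustar (um e) :=
          Finset.mem_symmDiff.mpr (Or.inl ⟨hx, hxu⟩)
        exact hxu (hBsub e (hsub hxd))
      exact hmaxe (Finset.ssubset_iff_subset_ne.mpr ⟨hsub2, hne.symm⟩)
    rw [if_neg h1, if_neg h2]
    ring
  -- for e with um e = ustar : 2 * G e = 2 ^ |De|
  have hGe1 : ∀ e : Fin n, um e = ustar →
      2 * G e = 2 ^ ((univ \ ((um e).filter (fun t => jm e < t))).card : ℕ) := by
    intro e hue
    rw [hG, aux_G_eval um jm ustar e]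
    have h1 : ¬ (ustar ∩ (univ \ ((um e).filter (fun t => jm e < t))) = ∅) := by
      intro hc
      have hj1 : jm e ∈ ustar := hue ▸ hj e
      have hj2 : jm e ∉ (um e).filter (fun t => jm e < t) := by
        intro hcmem
        exact absurd (Finset.mem_filter.mp hcmem).2 (lt_irrefl (jm e))
      have : jm e ∈ ustar ∩ (univ \ ((um e).filter (fun t => jm e < t))) :=
        Finset.mem_inter.mpr ⟨hj1, Finset.mem_sdiff.mpr ⟨Finset.mem_univ _, hj2⟩⟩
      rw [hc] at this
      exact absurd this (Finset.notMem_empty _)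
    have h2 : (symmDiff ustar (um e)) ∩ (univ \ ((um e).filter (fun t => jm e < t))) = ∅ := by
      rw [hue, symmDiff_self]
      simp
    rw [if_neg h1, if_pos h2]
    ring
  -- step C : reduce to the in-play columns with um e = ustar
  set q : Fin n → Prop := fun e => e ∈ symmDiff a b ∧ um e = ustar with hq
  have hsum2 : ∑ e ∈ univ.filter q, d e * 2 ^ ((univ \ ((um e).filter (fun t => jm e < t))).card : ℕ) = 0 := by
    have : ∑ e ∈ univ.filter q, d e * 2 ^ ((univ \ ((um e).filter (fun t => jm e < t))).card : ℕ)
        = ∑ e : Fin n, d e * (2 * G e) := by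
      rw [← Finset.sum_filter_add_sum_filter_not univ q (fun e => d e * (2 * G e))]
      have e1 : ∀ e ∈ univ.filter q,
          d e * (2 * G e) = d e * 2 ^ ((univ \ ((um e).filter (fun t => jm e < t))).card : ℕ) := by
        intro e he
        rw [hGe1 e (Finset.mem_filter.mp he).2.2]
      have e2 : ∀ e ∈ univ.filter (fun e => ¬ q e), d e * (2 * G e) = 0 := by
        intro e he
        have hne : ¬ (e ∈ symmDiff a b ∧ um e = ustar) := (Finset.mem_filter.mp he).2
        by_cases hes : e ∈ symmDiff a b
        · rw [hGe0 e hes (fun hc => hne ⟨hes, hc⟩)]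
          ring
        · have hde : d e = 0 := by
            rw [hd]
            by_cases ha : e ∈ a <;> by_cases hb : e ∈ b
            · simp [ha, hb]
            · exact absurd (Finset.mem_symmDiff.mpr (Or.inl ⟨ha, hb⟩)) hes
            · exact absurd (Finset.mem_symmDiff.mpr (Or.inr ⟨hb, ha⟩)) hes
            · simp [ha, hb]
          rw [hde]
          ring

      rw [Finset.sum_congr rfl e1, Finset.sum_congr rfl e2, Finset.sum_const_zero, add_zero]
    rw [this]
    have : ∑ e : Fin n, d e * (2 * G e) = 2 * ∑ e : Fin n, d e * G e := by
      rw [Finset.mul_sum]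
      apply Finset.sum_congr rfl
      intro e _
      ring
    rw [this, hzero]
    ring
  -- step D : exponents are injective on the filter set, coefficients are ±1
  have hinjexp : Set.InjOn (fun e => ((univ \ ((um e).filter (fun t => jm e < t))).card : ℕ))
      (univ.filter q : Finset (Fin n)) := by
    intro e1 he1 e2 he2 hcardeq
    simp only [Finset.coe_filter, Set.mem_setOf_eq] at he1 he2
    have hu1 : um e1 = ustar := he1.2.2
    have hu2 : um e2 = ustar := he2.2.2
    -- reduce to card of B equal
    have hBcard : ((um e1).filter (fun t => jm e1 < t)).card
        = ((um e2).filter (fun t => jm e2 < t)).card := by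
      have c1 := Finset.card_sdiff_of_subset (Finset.subset_univ ((um e1).filter (fun t => jm e1 < t)))
      have c2 := Finset.card_sdiff_of_subset (Finset.subset_univ ((um e2).filter (fun t => jm e2 < t)))
      simp only at hcardeq
      rw [c1, c2] at hcardeq
      have b1 : ((um e1).filter (fun t => jm e1 < t)).card ≤ Fintype.card (Fin k) :=
        le_trans (Finset.card_le_card (Finset.filter_subset _ _)) (Finset.card_le_univ _)
      have b2 : ((um e2).filter (fun t => jm e2 < t)).card ≤ Fintype.card (Fin k) :=
        le_trans (Finset.card_le_card (Finset.filter_subset _ _)) (Finset.card_le_univ _)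
      simp only [Finset.card_univ] at hcardeq
      omega
    -- strict monotonicity: different jm values give different B cards
    have hkey : ∀ x y : Fin n, um x = ustar → um y = ustar → jm x < jm y →
        ((um y).filter (fun t => jm y < t)).card < ((um x).filter (fun t => jm x < t)).card := by
      intro x y hx hy hlt
      apply Finset.card_lt_card
      have hsub : (um y).filter (fun t => jm y < t) ⊆ (um x).filter (fun t => jm x < t) := by
        intro t ht
        rw [Finset.mem_filter] at ht ⊢
        refine ⟨?_, lt_trans hlt ht.2⟩
        rw [hx]
        rw [hy] at ht
        exact ht.1
      refine (Finset.ssubset_iff_of_subset hsub).mpr ⟨jm y, ?_, ?_⟩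
      · rw [Finset.mem_filter, hx]
        refine ⟨?_, hlt⟩
        have := hj y
        rwa [hy] at this
      · simp [Finset.mem_filter]
    have hjeq : jm e1 = jm e2 := by
      rcases lt_trichotomy (jm e1) (jm e2) with hlt | heq | hgt
      · exact absurd hBcard (Nat.ne_of_gt (hkey e1 e2 hu1 hu2 hlt))
      · exact heq
      · exact absurd hBcard (Nat.ne_of_lt (hkey e2 e1 hu2 hu1 hgt))
    exact hinj (by rw [Prod.mk.injEq]; exact ⟨hu1.trans hu2.symm, hjeq⟩)
  have hdpm : ∀ e ∈ univ.filter q, d e = 1 ∨ d e = -1 := by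
    intro e he
    have hes : e ∈ symmDiff a b := (Finset.mem_filter.mp he).2.1
    rcases Finset.mem_symmDiff.mp hes with ⟨h1, h2⟩ | ⟨h1, h2⟩
    · left; rw [hd]; simp [h1, h2]
    · right; rw [hd]; simp [h1, h2]
  have hempty := aux_distinct_powers (univ.filter q) d
      (fun e => ((univ \ ((um e).filter (fun t => jm e < t))).card : ℕ)) hinjexp hdpm hsum2
  have : estar ∈ univ.filter q := by
    rw [Finset.mem_filter]
    exact ⟨Finset.mem_univ _, hestar, humstar⟩
  rw [hempty] at this
  exact absurd this (Finset.notMem_empty _)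

end Core2
lemma aux_filter_mem_card {k : ℕ} (j : Fin k) :
    ((univ : Finset (Finset (Fin k))).filter (fun u => j ∈ u)).card = 2 ^ (k - 1) := by
  have hk : 1 ≤ k := j.pos
  have hbij : ((univ : Finset (Finset (Fin k))).filter (fun u => j ∈ u)).card
      = ((univ : Finset (Finset (Fin k))).filter (fun u => ¬ j ∈ u)).card := by
    refine Finset.card_bij' (fun u _ => u.erase j) (fun u _ => insert j u) ?_ ?_ ?_ ?_
    · intro u hu
      simp [Finset.mem_filter, Finset.notMem_erase]
    · intro u hu
      simp [Finset.mem_filter]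
    · intro u hu
      exact Finset.insert_erase (Finset.mem_filter.mp hu).2
    · intro u hu
      exact Finset.erase_insert (Finset.mem_filter.mp hu).2
  have hsplit := Finset.card_filter_add_card_filter_not
    (s := (univ : Finset (Finset (Fin k)))) (p := fun u => j ∈ u)
  have huniv : (univ : Finset (Finset (Fin k))).card = 2 ^ k := by
    rw [Finset.card_univ, Fintype.card_finset, Fintype.card_fin]
  have hpow : 2 ^ k = 2 * 2 ^ (k - 1) := by
    conv_lhs => rw [show k = (k-1) + 1 by omega]
    rw [pow_succ]
    ring
  omega

lemma aux_col_card (k : ℕ) :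
    Fintype.card {p : Finset (Fin k) × Fin k // p.2 ∈ p.1} = k * 2 ^ (k - 1) := by
  rw [Fintype.card_subtype]
  rw [Finset.card_filter]
  rw [← Finset.univ_product_univ, Finset.sum_product]
  have hinner : ∀ u : Finset (Fin k),
      (∑ j : Fin k, if ((u, j) : Finset (Fin k) × Fin k).2 ∈ ((u, j) : Finset (Fin k) × Fin k).1 then 1 else 0) = u.card := by
    intro u
    simp only
    rw [Finset.sum_boole, Finset.filter_mem_eq_inter, Finset.univ_inter, Nat.cast_id]
  rw [Finset.sum_congr rfl (fun u _ => hinner u)]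
  have hswap : ∑ u : Finset (Fin k), u.card
      = ∑ u : Finset (Fin k), ∑ j : Fin k, (if j ∈ u then 1 else 0) := by
    apply Finset.sum_congr rfl
    intro u _
    rw [Finset.sum_boole, Finset.filter_mem_eq_inter, Finset.univ_inter, Nat.cast_id]
  rw [hswap, Finset.sum_comm]
  have hcol : ∀ j : Fin k, (∑ u : Finset (Fin k), if j ∈ u then 1 else 0) = 2 ^ (k-1) := by
    intro j
    rw [Finset.sum_boole, aux_filter_mem_card j, Nat.cast_id]
  rw [Finset.sum_congr rfl (fun j _ => hcol j), Finset.sum_const, Finset.card_univ,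
    Fintype.card_fin, smul_eq_mul]

lemma aux_exists_maps {k n : ℕ} (hkn : n ≤ k * 2 ^ (k - 1)) :
    ∃ (um : Fin n → Finset (Fin k)) (jm : Fin n → Fin k),
      (∀ e, jm e ∈ um e) ∧ Function.Injective (fun e => (um e, jm e)) := by
  have hcard : Fintype.card (Fin n) ≤ Fintype.card {p : Finset (Fin k) × Fin k // p.2 ∈ p.1} := by
    rw [aux_col_card, Fintype.card_fin]
    exact hkn
  obtain ⟨f⟩ := Function.Embedding.nonempty_of_card_le hcard
  refine ⟨fun e => (f e).1.1, fun e => (f e).1.2, fun e => (f e).2, ?_⟩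
  intro e1 e2 he
  apply f.injective
  apply Subtype.ext
  simp only at he
  exact Prod.ext (congrArg Prod.fst he) (congrArg Prod.snd he)
lemma jac_univ_card {n : ℕ} (hn : 1 ≤ n) (a b : Finset (Fin n))
    (hjac : jac a univ = jac b univ) : a.card = b.card := by
  have hsd : ∀ s : Finset (Fin n), (s \ univ ∪ univ \ s) = univ \ s := by
    intro s
    rw [Finset.sdiff_eq_empty_iff_subset.mpr (Finset.subset_univ s), Finset.empty_union]
  have huni : ∀ s : Finset (Fin n), s ∪ univ = univ := by
    intro s
    rw [Finset.union_eq_right.mpr (Finset.subset_univ s)]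
  rw [jac, jac, hsd, hsd, huni, huni] at hjac
  have hpos : (0:ℝ) < ((univ : Finset (Fin n)).card : ℝ) := by
    rw [Finset.card_univ, Fintype.card_fin]
    exact_mod_cast hn
  have hc' : (univ \ a).card = (univ \ b).card := by
    field_simp at hjac
    exact_mod_cast hjac
  have ha := Finset.card_sdiff_of_subset (Finset.subset_univ a)
  have hb := Finset.card_sdiff_of_subset (Finset.subset_univ b)
  have ha' : a.card ≤ (univ : Finset (Fin n)).card := Finset.card_le_univ a
  have hb' : b.card ≤ (univ : Finset (Fin n)).card := Finset.card_le_univ b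
  omega

lemma jac_inter_card {n : ℕ} (a b r : Finset (Fin n)) (hcard : a.card = b.card)
    (hjac : jac a r = jac b r) : (a ∩ r).card = (b ∩ r).card := by
  by_cases hu : a ∪ r = ∅
  · have ha : a = ∅ := by
      have := Finset.union_eq_empty.mp hu
      exact this.1
    have hr : r = ∅ := (Finset.union_eq_empty.mp hu).2
    have hb : b = ∅ := by
      rw [← Finset.card_eq_zero, ← hcard, ha, Finset.card_empty]
    rw [ha, hb]
  · by_cases hv : b ∪ r = ∅
    · exfalso
      have hb : b = ∅ := (Finset.union_eq_empty.mp hv).1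
      have hr : r = ∅ := (Finset.union_eq_empty.mp hv).2
      have ha : a = ∅ := by
        rw [← Finset.card_eq_zero, hcard, hb, Finset.card_empty]
      exact hu (by rw [ha, hr, Finset.empty_union])
    · -- both unions nonempty
      have hdva : (0:ℝ) < ((a ∪ r).card : ℝ) := by
        have : 0 < (a ∪ r).card := Finset.card_pos.mpr (Finset.nonempty_of_ne_empty hu)
        exact_mod_cast this
      have hdvb : (0:ℝ) < ((b ∪ r).card : ℝ) := by
        have : 0 < (b ∪ r).card := Finset.card_pos.mpr (Finset.nonempty_of_ne_empty hv)
        exact_mod_cast this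
      have hsa : ((a \ r ∪ r \ a)).card + 2 * (a ∩ r).card = a.card + r.card := by
        have := aux_symmDiff_card a r
        rwa [symmDiff_def] at this
      have hsb : ((b \ r ∪ r \ b)).card + 2 * (b ∩ r).card = b.card + r.card := by
        have := aux_symmDiff_card b r
        rwa [symmDiff_def] at this
      have hua : (a ∪ r).card + (a ∩ r).card = a.card + r.card :=
        Finset.card_union_add_card_inter a r
      have hub : (b ∪ r).card + (b ∩ r).card = b.card + r.card :=
        Finset.card_union_add_card_inter b r
      rw [jac, jac, div_eq_div_iff (ne_of_gt hdva) (ne_of_gt hdvb)] at hjac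
      -- cast everything to ℝ
      set T : ℝ := (a.card : ℝ) + (r.card : ℝ) with hT
      have hTb : ((b.card : ℝ) + (r.card : ℝ)) = T := by
        rw [hT, hcard]
      have hsa' : ((a \ r ∪ r \ a).card : ℝ) + 2 * ((a ∩ r).card : ℝ) = (a.card : ℝ) + (r.card : ℝ) := by
        exact_mod_cast hsa
      have hsb' : ((b \ r ∪ r \ b).card : ℝ) + 2 * ((b ∩ r).card : ℝ) = (b.card : ℝ) + (r.card : ℝ) := by
        exact_mod_cast hsb
      have hua' : ((a ∪ r).card : ℝ) + ((a ∩ r).card : ℝ) = (a.card : ℝ) + (r.card : ℝ) := by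
        exact_mod_cast hua
      have hub' : ((b ∪ r).card : ℝ) + ((b ∩ r).card : ℝ) = (b.card : ℝ) + (r.card : ℝ) := by
        exact_mod_cast hub
      have e1 : ((a \ r ∪ r \ a).card : ℝ) = T - 2 * ((a ∩ r).card : ℝ) := by
        rw [hT]; linarith
      have e2 : ((b \ r ∪ r \ b).card : ℝ) = T - 2 * ((b ∩ r).card : ℝ) := by
        rw [← hTb]; linarith
      have e3 : ((a ∪ r).card : ℝ) = T - ((a ∩ r).card : ℝ) := by
        rw [hT]; linarith
      have e4 : ((b ∪ r).card : ℝ) = T - ((b ∩ r).card : ℝ) := by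
        rw [← hTb]; linarith
      rw [e1, e2, e3, e4] at hjac
      have hTpos : (0:ℝ) < T := by
        rw [e3] at hdva
        have : (0:ℝ) ≤ ((a ∩ r).card : ℝ) := Nat.cast_nonneg _
        linarith
      have : T * (((b ∩ r).card : ℝ) - ((a ∩ r).card : ℝ)) = 0 := by nlinarith [hjac]
      have hzz : ((b ∩ r).card : ℝ) = ((a ∩ r).card : ℝ) := by
        rcases mul_eq_zero.mp this with h | h
        · exact absurd h (ne_of_gt hTpos)
        · linarith
      exact_mod_cast hzz.symm

lemma exists_resolving {k n : ℕ} (hn : 1 ≤ n) (hkn : n ≤ k * 2 ^ (k - 1)) :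
    ∃ R : Finset (Finset (Fin n)), R.card ≤ 2 ^ k + 1 ∧
      ∀ a b : Finset (Fin n), a ≠ b → ∃ r ∈ R, jac a r ≠ jac b r := by
  obtain ⟨um, jm, hj, hinj⟩ := aux_exists_maps hkn
  refine ⟨insert univ ((univ : Finset (Finset (Fin k))).image (Qset um jm)), ?_, ?_⟩
  · calc (insert univ ((univ : Finset (Finset (Fin k))).image (Qset um jm))).card
        ≤ ((univ : Finset (Finset (Fin k))).image (Qset um jm)).card + 1 :=
          Finset.card_insert_le _ _
    _ ≤ (univ : Finset (Finset (Fin k))).card + 1 :=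
          Nat.add_le_add_right (Finset.card_image_le) 1
    _ = 2 ^ k + 1 := by rw [Finset.card_univ, Fintype.card_finset, Fintype.card_fin]
  · intro a b hab
    by_contra hc
    push_neg at hc
    apply hab
    have hcard : a.card = b.card :=
      jac_univ_card hn a b (hc univ (Finset.mem_insert_self _ _))
    apply core_inj um jm hj hinj a b
    intro w
    apply jac_inter_card a b (Qset um jm w) hcard
    exact hc (Qset um jm w)
      (Finset.mem_insert_of_mem (Finset.mem_image_of_mem _ (Finset.mem_univ w)))
lemma metricDim_nonempty_set (n : ℕ) (hn : 1 ≤ n) :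
    {m : ℕ | ∃ R : Finset (Finset (Fin n)), R.card = m ∧
      ∀ a b : Finset (Fin n), a ≠ b → ∃ r ∈ R, jac a r ≠ jac b r}.Nonempty := by
  have hkn : n ≤ n * 2 ^ (n - 1) := Nat.le_mul_of_pos_right n (by positivity)
  obtain ⟨R, _, hres⟩ := exists_resolving hn hkn
  exact ⟨R.card, R, rfl, hres⟩

lemma metricDim_le {k n : ℕ} (hn : 1 ≤ n) (hkn : n ≤ k * 2 ^ (k - 1)) :
    metricDim n ≤ 2 ^ k + 1 := by
  obtain ⟨R, hcard, hres⟩ := exists_resolving hn hkn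
  have hmem : R.card ∈ {m : ℕ | ∃ R : Finset (Finset (Fin n)), R.card = m ∧
      ∀ a b : Finset (Fin n), a ≠ b → ∃ r ∈ R, jac a r ≠ jac b r} := ⟨R, rfl, hres⟩
  exact le_trans (Nat.sInf_le hmem) hcard

lemma metricDim_lower_count (n : ℕ) (hn : 1 ≤ n) :
    2 ^ n ≤ ((n+1)^2) ^ (metricDim n) := by
  obtain ⟨R, hRcard, hres⟩ := Nat.sInf_mem (metricDim_nonempty_set n hn)
  -- the finite set of possible jac values
  set V : Finset ℝ := (univ : Finset (Fin (n+1) × Fin (n+1))).image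
    (fun p => ((p.1 : ℕ) : ℝ) / ((p.2 : ℕ) : ℝ)) with hV
  have hmemV : ∀ a r : Finset (Fin n), jac a r ∈ V := by
    intro a r
    have h1 : ((a \ r) ∪ (r \ a)).card ≤ n := by
      calc ((a \ r) ∪ (r \ a)).card ≤ (univ : Finset (Fin n)).card := Finset.card_le_univ _
      _ = n := by rw [Finset.card_univ, Fintype.card_fin]
    have h2 : (a ∪ r).card ≤ n := by
      calc (a ∪ r).card ≤ (univ : Finset (Fin n)).card := Finset.card_le_univ _
      _ = n := by rw [Finset.card_univ, Fintype.card_fin]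
    rw [hV, Finset.mem_image]
    refine ⟨(⟨((a \ r) ∪ (r \ a)).card, by omega⟩, ⟨(a ∪ r).card, by omega⟩), Finset.mem_univ _, ?_⟩
    rw [jac]
  have hVcard : V.card ≤ (n+1)^2 := by
    calc V.card ≤ (univ : Finset (Fin (n+1) × Fin (n+1))).card := Finset.card_image_le
    _ = (n+1)^2 := by
        rw [Finset.card_univ, Fintype.card_prod, Fintype.card_fin]
        ring
  -- injective map
  have hinj : Function.Injective
      (fun (a : Finset (Fin n)) => (fun r : {r // r ∈ R} => (⟨jac a r.1, hmemV a r.1⟩ : {v // v ∈ V}))) := by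
    intro a b hab
    by_contra hne
    obtain ⟨r, hrR, hrne⟩ := hres a b hne
    have := congrFun hab ⟨r, hrR⟩
    rw [Subtype.mk.injEq] at this
    exact hrne this
  have hcard := Fintype.card_le_of_injective _ hinj
  rw [Fintype.card_finset, Fintype.card_fin, Fintype.card_fun, Fintype.card_coe,
    Fintype.card_coe, hRcard] at hcard
  calc 2 ^ n ≤ V.card ^ metricDim n := hcard
  _ ≤ ((n+1)^2) ^ metricDim n := Nat.pow_le_pow_left hVcard _

/-- `β(2^{Fin n}, Jac) = Θ(n / ln n)` as `n → ∞`. -/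
theorem stmt17 :
    ∃ c C : ℝ, ∃ N : ℕ, 0 < c ∧ c ≤ C ∧
      ∀ n : ℕ, N ≤ n →
        c * (n : ℝ) / Real.log (n : ℝ) ≤ (metricDim n : ℝ) ∧
        (metricDim n : ℝ) ≤ C * (n : ℝ) / Real.log (n : ℝ) := by
  have hlog2pos : (0:ℝ) < Real.log 2 := Real.log_pos (by norm_num)
  refine ⟨Real.log 2 / 8, 100, 3, by positivity, by nlinarith [Real.log_two_lt_d9], ?_⟩
  intro n hn
  have hn1 : 1 ≤ n := by omega
  have hnR : (3:ℝ) ≤ (n:ℝ) := by exact_mod_cast hn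
  have hlogn : (0:ℝ) < Real.log n := Real.log_pos (by linarith)
  have hm0 : (0:ℝ) ≤ (metricDim n : ℝ) := Nat.cast_nonneg _
  constructor
  · -- lower bound
    have hcount := metricDim_lower_count n hn1
    have hcountR : (2:ℝ) ^ n ≤ (((n:ℝ)+1)^2) ^ (metricDim n) := by
      exact_mod_cast hcount
    have hlogle : Real.log ((2:ℝ)^n) ≤ Real.log ((((n:ℝ)+1)^2) ^ (metricDim n)) :=
      Real.log_le_log (by positivity) hcountR
    rw [Real.log_pow, Real.log_pow, Real.log_pow] at hlogle
    -- hlogle : n * log 2 ≤ metricDim n * (2 * log (n+1))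
    have hlognp1 : Real.log ((n:ℝ)+1) ≤ 2 * Real.log n := by
      have h1 : ((n:ℝ)+1) ≤ (n:ℝ)^2 := by nlinarith
      have := Real.log_le_log (by linarith) h1
      rwa [show ((n:ℝ)^2) = (n:ℝ)^(2:ℕ) by norm_num, Real.log_pow, Nat.cast_ofNat] at this
    rw [div_le_iff₀ hlogn]
    have hstep : (metricDim n : ℝ) * (2 * Real.log ((n:ℝ)+1))
        ≤ (metricDim n : ℝ) * (4 * Real.log n) := by
      apply mul_le_mul_of_nonneg_left _ hm0
      linarith
    have : (n:ℝ) * Real.log 2 ≤ (metricDim n : ℝ) * (4 * Real.log n) := by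
      calc (n:ℝ) * Real.log 2 ≤ (metricDim n : ℝ) * (2 * Real.log ((n:ℝ)+1)) := hlogle
      _ ≤ _ := hstep
    nlinarith [hlogn, hnR]
  · -- upper bound
    have hex : ∃ k : ℕ, n ≤ k * 2 ^ (k - 1) :=
      ⟨n, Nat.le_mul_of_pos_right n (by positivity)⟩
    set k := Nat.find hex with hk
    have hkspec : n ≤ k * 2 ^ (k - 1) := Nat.find_spec hex
    have hk2 : 2 ≤ k := by
      by_contra hc
      push_neg at hc
      interval_cases k <;> omega
    obtain ⟨j, hj⟩ : ∃ j, k = j + 2 := ⟨k - 2, by omega⟩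
    have hmin : ¬ (n ≤ (j+1) * 2 ^ j) := by
      have := Nat.find_min hex (m := k - 1) (by omega)
      rwa [show k - 1 = j + 1 by omega, show (j+1) - 1 = j by omega] at this
    push_neg at hmin
    -- bounds
    have hub : metricDim n ≤ 2 ^ (j+2) + 1 := by
      have := metricDim_le hn1 hkspec
      rwa [hj] at this
    have hubR : (metricDim n : ℝ) ≤ 2 ^ (j+2) + 1 := by
      have := (Nat.cast_le (α := ℝ)).mpr hub
      push_cast at this
      linarith
    have hnlow : ((j:ℝ)+1) * 2 ^ j + 1 ≤ (n:ℝ) := by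
      have : (j+1) * 2 ^ j + 1 ≤ n := hmin
      exact_mod_cast this
    have hnup : (n:ℝ) ≤ 4 ^ (j+2) := by
      have h1 : n ≤ (j+2) * 2 ^ (j+1) := by
        have := hkspec
        rwa [hj, show (j+2) - 1 = j + 1 by omega] at this
      have h2 : (j+2) * 2 ^ (j+1) ≤ 4 ^ (j+2) := by
        have hj3 : j + 2 ≤ 2 ^ (j+3) := le_of_lt (lt_of_lt_of_le (Nat.lt_two_pow_self (n := j+2)) (Nat.pow_le_pow_right (by norm_num) (by omega)))
        calc (j+2) * 2 ^ (j+1) ≤ 2 ^ (j+3) * 2 ^ (j+1) := Nat.mul_le_mul_right _ hj3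
        _ = 2 ^ (2*(j+2)) := by rw [← pow_add]; ring_nf
        _ = 4 ^ (j+2) := by rw [pow_mul]; norm_num
      exact_mod_cast le_trans h1 h2
    have hlogup : Real.log n ≤ ((j:ℝ)+2) * (2 * Real.log 2) := by
      have := Real.log_le_log (by linarith) hnup
      rwa [show ((4:ℝ)^(j+2)) = ((2:ℝ)^(2:ℕ))^(j+2) by norm_num, ← pow_mul,
        Real.log_pow, Nat.cast_mul, Nat.cast_ofNat, Nat.cast_add, Nat.cast_ofNat,
        mul_comm (2:ℝ) ((j:ℝ)+2), mul_assoc] at this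
    rw [le_div_iff₀ hlogn]
    have hlog2 : Real.log 2 < 0.7 := by
      have := Real.log_two_lt_d9
      linarith
    have h2jpos : (1:ℝ) ≤ 2 ^ j := one_le_pow₀ (by norm_num)
    have h2jpos0 : (0:ℝ) ≤ 2 ^ j := by linarith
    have hjpos : (0:ℝ) ≤ (j:ℝ) := Nat.cast_nonneg j
    have hlogn0 : (0:ℝ) ≤ Real.log n := le_of_lt hlogn
    -- (2^{j+2}+1) * log n ≤ (4*2^j+1) * ((j+2)*1.4) ≤ 100*((j+1)*2^j+1) ≤ 100 n
    have key : ((2:ℝ) ^ (j+2) + 1) * Real.log n ≤ 100 * (n:ℝ) := by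
      have e1 : ((2:ℝ) ^ (j+2) + 1) = 4 * 2^j + 1 := by ring
      have lhs_le : ((2:ℝ) ^ (j+2) + 1) * Real.log n
          ≤ (4 * 2^j + 1) * (((j:ℝ)+2) * (2 * Real.log 2)) := by
        rw [e1]
        apply mul_le_mul_of_nonneg_left hlogup
        positivity
      have hA : (0:ℝ) ≤ (4 * 2^j + 1) * ((j:ℝ)+2) := by positivity
      have mid1 : (4 * (2:ℝ)^j + 1) * (((j:ℝ)+2) * (2 * Real.log 2))
          ≤ 1.4 * ((4 * 2^j + 1) * ((j:ℝ)+2)) := by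
        have h2L : 2 * Real.log 2 ≤ 1.4 := by linarith
        calc (4 * (2:ℝ)^j + 1) * (((j:ℝ)+2) * (2 * Real.log 2))
            = (2 * Real.log 2) * ((4 * 2^j + 1) * ((j:ℝ)+2)) := by ring
        _ ≤ 1.4 * ((4 * 2^j + 1) * ((j:ℝ)+2)) := mul_le_mul_of_nonneg_right h2L hA
      have mid2 : (1.4:ℝ) * ((4 * 2^j + 1) * ((j:ℝ)+2)) ≤ 100 * (((j:ℝ)+1) * 2 ^ j + 1) := by
        nlinarith [mul_nonneg (sub_nonneg.mpr h2jpos) hjpos, h2jpos, hjpos,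
          mul_nonneg hjpos h2jpos0]
      have mid : (4 * (2:ℝ)^j + 1) * (((j:ℝ)+2) * (2 * Real.log 2))
          ≤ 100 * (((j:ℝ)+1) * 2 ^ j + 1) := le_trans mid1 mid2
      have final : 100 * (((j:ℝ)+1) * 2 ^ j + 1) ≤ 100 * (n:ℝ) := by linarith
      calc ((2:ℝ) ^ (j+2) + 1) * Real.log n
          ≤ (4 * 2^j + 1) * (((j:ℝ)+2) * (2 * Real.log 2)) := lhs_le
      _ ≤ 100 * (((j:ℝ)+1) * 2 ^ j + 1) := mid
      _ ≤ 100 * (n:ℝ) := final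
    calc (metricDim n : ℝ) * Real.log n ≤ ((2:ℝ) ^ (j+2) + 1) * Real.log n := by
          apply mul_le_mul_of_nonneg_right hubR hlogn0
    _ ≤ 100 * (n:ℝ) := key
end

section
/- Let 0 < ε < 1 and let k : ℕ → ℕ be any function with k(n) ≥ (4+ε)·√n for all sufficiently large n. For each n, let B(n) be the number of k(n)-tuples (r₁,…,r_{k(n)}) of subsets of Fin n for which there exist distinct a, b ⊆ Fin n with |a| ≤ (1−ε)·(ln π)·√n/ln(n) and |b| ≤ (1−ε)·(ln π)·√n/ln(n) such that Jac(a, r_t) = Jac(b, r_t) and Jac(a, Fin n \ r_t) = Jac(b, Fin n \ r_t) for every t = 1,…,k(n). Then B(n)/2^{n·k(n)} → 0 as n → ∞; i.e., with probability tending to 1, the set R := {r₁, r₁^c, …, r_{k(n)}, r_{k(n)}^c} resolves all distinct pairs of subsets of Fin n of size at most (1−ε)·(ln π)·√n/ln(n). -/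
/-- The number of `k n`-tuples `(r₁, …, r_{k n})` of subsets of `Fin n` for which some pair of
distinct `a, b ⊆ Fin n`, both of size at most `(1−ε)(ln π)√n / ln n`, collides with every
`r_t` and every `r_tᶜ`. -/
noncomputable def B19 (ε : ℝ) (k : ℕ → ℕ) (n : ℕ) : ℕ :=
  Nat.card {rr : Fin (k n) → Finset (Fin n) //
    ∃ a b : Finset (Fin n), a ≠ b ∧
      (a.card : ℝ) ≤ (1 - ε) * Real.log Real.pi * Real.sqrt (n : ℝ) / Real.log (n : ℝ) ∧
      (b.card : ℝ) ≤ (1 - ε) * Real.log Real.pi * Real.sqrt (n : ℝ) / Real.log (n : ℝ) ∧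
      ∀ t : Fin (k n), jac a (rr t) = jac b (rr t) ∧ jac a (rr t)ᶜ = jac b (rr t)ᶜ}

lemma jac_eq {α : Type*} [DecidableEq α] (a s : Finset α) :
    jac a s = ((a.card : ℝ) + s.card - 2 * (a ∩ s).card) /
      ((a.card : ℝ) + s.card - (a ∩ s).card) := by
  unfold jac
  have h1 := Finset.card_sdiff_add_card_inter a s
  have h2 := Finset.card_sdiff_add_card_inter s a
  have h3 := Finset.card_union_add_card_inter a s
  rw [Finset.inter_comm s a] at h2
  have h4 : ((a \ s) ∪ (s \ a)).card = (a \ s).card + (s \ a).card :=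
    Finset.card_union_of_disjoint disjoint_sdiff_sdiff
  have c1 : ((a \ s).card : ℝ) + (a ∩ s).card = a.card := by exact_mod_cast h1
  have c2 : ((s \ a).card : ℝ) + (a ∩ s).card = s.card := by exact_mod_cast h2
  have c3 : ((a ∪ s).card : ℝ) + (a ∩ s).card = a.card + s.card := by exact_mod_cast h3
  congr 1
  · push_cast [h4]; linarith
  · linarith

lemma keyA {α : Type*} [DecidableEq α] (a b s : Finset α) (x : α)
    (hxa : x ∈ a) (hxb : x ∉ b) (hxs : x ∉ s) :
    ¬(jac a s = jac b s ∧ jac a (insert x s) = jac b (insert x s)) := by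
  rintro ⟨h1, h2⟩
  by_cases hbs : b ∪ s = ∅
  · obtain ⟨hb, hs⟩ := Finset.union_eq_empty.mp hbs
    subst hb hs
    rw [jac_eq, jac_eq] at h1
    simp at h1
    exact absurd (h1 ▸ hxa) (Finset.notMem_empty x)
  · have has : (a ∪ s).Nonempty := ⟨x, Finset.mem_union_left _ hxa⟩
    have hbsne : (b ∪ s).Nonempty := Finset.nonempty_iff_ne_empty.mpr hbs
    have hbs' : (b ∪ insert x s).Nonempty := ⟨x, by simp⟩
    have hais : a ∩ insert x s = insert x (a ∩ s) := by
      ext y; simp only [Finset.mem_inter, Finset.mem_insert]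
      constructor
      · rintro ⟨hy, rfl | hy'⟩
        · exact Or.inl rfl
        · exact Or.inr ⟨hy, hy'⟩
      · rintro (rfl | ⟨hy, hy'⟩)
        · exact ⟨hxa, Or.inl rfl⟩
        · exact ⟨hy, Or.inr hy'⟩
    have hbis : b ∩ insert x s = b ∩ s := by
      ext y; simp only [Finset.mem_inter, Finset.mem_insert]
      constructor
      · rintro ⟨hy, rfl | hy'⟩
        · exact absurd hy hxb
        · exact ⟨hy, hy'⟩
      · rintro ⟨hy, hy'⟩; exact ⟨hy, Or.inr hy'⟩
    have hxias : x ∉ a ∩ s := fun h => hxs (Finset.mem_inter.mp h).2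
    -- denominators positive
    have u1 : ((a ∪ s).card : ℝ) + (a ∩ s).card = a.card + s.card := by
      exact_mod_cast Finset.card_union_add_card_inter a s
    have u2 : ((b ∪ s).card : ℝ) + (b ∩ s).card = b.card + s.card := by
      exact_mod_cast Finset.card_union_add_card_inter b s
    have p1 : (0:ℝ) < (a ∪ s).card := by exact_mod_cast Finset.card_pos.mpr has
    have p2 : (0:ℝ) < (b ∪ s).card := by exact_mod_cast Finset.card_pos.mpr hbsne
    have dA : (0:ℝ) < (a.card : ℝ) + s.card - (a ∩ s).card := by linarith
    have dB : (0:ℝ) < (b.card : ℝ) + s.card - (b ∩ s).card := by linarith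
    rw [jac_eq, jac_eq] at h1 h2
    rw [hais, hbis, Finset.card_insert_of_notMem hxs,
      Finset.card_insert_of_notMem hxias] at h2
    push_cast at h2
    rw [div_eq_div_iff (by linarith) (by linarith)] at h1
    rw [div_eq_div_iff (by linarith) (by linarith)] at h2
    have hjρ : ((b ∩ s).card : ℝ) ≤ (s.card : ℝ) := by
      exact_mod_cast Finset.card_le_card (Finset.inter_subset_right)
    have hB0 : (0:ℝ) ≤ (b.card : ℝ) := by positivity
    have hi0 : (0:ℝ) ≤ ((a ∩ s).card : ℝ) := by positivity
    nlinarith [h1, h2]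

lemma keyA' {α : Type*} [DecidableEq α] {a b : Finset α} (hab : a ≠ b) :
    ∃ x : α, ∀ s : Finset α, x ∉ s →
      ¬(jac a s = jac b s ∧ jac a (insert x s) = jac b (insert x s)) := by
  have : ∃ x, (x ∈ a ∧ x ∉ b) ∨ (x ∈ b ∧ x ∉ a) := by
    by_contra h
    push_neg at h
    exact hab (Finset.ext fun y => ⟨fun hy => (h y).1 hy, fun hy => (h y).2 hy⟩)
  obtain ⟨x, hx | hx⟩ := this
  · exact ⟨x, fun s hs => keyA a b s x hx.1 hx.2 hs⟩
  · refine ⟨x, fun s hs h => keyA b a s x hx.1 hx.2 hs ⟨h.1.symm, h.2.symm⟩⟩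

open Finset in
lemma countC {n : ℕ} {a b : Finset (Fin n)} (hab : a ≠ b)
    {x : Fin n} (hx : ∀ s : Finset (Fin n), x ∉ s →
      ¬(jac a s = jac b s ∧ jac a (insert x s) = jac b (insert x s)))
    [DecidablePred (fun r : Finset (Fin n) => jac a r = jac b r)] :
    (Finset.univ.filter (fun r : Finset (Fin n) => jac a r = jac b r)).card * 2 ≤ 2 ^ n := by
  classical
  set C := Finset.univ.filter (fun r : Finset (Fin n) => jac a r = jac b r) with hC
  set f : Finset (Fin n) → Finset (Fin n) :=
    fun r => if x ∈ r then r.erase x else insert x r with hf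
  have finv : Function.Involutive f := by
    intro r
    by_cases h : x ∈ r <;> simp [hf, h, Finset.insert_erase, Finset.erase_insert,
      Finset.mem_erase]
  have hdisj : Disjoint C (C.image f) := by
    rw [Finset.disjoint_left]
    intro r hr hr'
    obtain ⟨r', hr'C, hfr'⟩ := Finset.mem_image.mp hr'
    have hrC : jac a r = jac b r := (Finset.mem_filter.mp hr).2
    have hr'C' : jac a r' = jac b r' := (Finset.mem_filter.mp hr'C).2
    by_cases hxr : x ∈ r'
    · -- r = erase x r', so x ∉ r, r' = insert x r
      have : f r' = r'.erase x := by simp [hf, hxr]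
      rw [this] at hfr'
      have hxnr : x ∉ r := hfr' ▸ Finset.notMem_erase x r'
      have : r' = insert x r := by rw [← hfr', Finset.insert_erase hxr]
      exact hx r hxnr ⟨hrC, this ▸ hr'C'⟩
    · have : f r' = insert x r' := by simp [hf, hxr]
      rw [this] at hfr'
      exact hx r' hxr ⟨hr'C', hfr' ▸ hrC⟩
  have hcardim : (C.image f).card = C.card :=
    Finset.card_image_of_injective _ finv.injective
  have := Finset.card_union_of_disjoint hdisj
  have hle : (C ∪ C.image f).card ≤ 2 ^ n := by
    calc (C ∪ C.image f).card ≤ (Finset.univ : Finset (Finset (Fin n))).card :=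
          Finset.card_le_card (Finset.subset_univ _)
      _ = 2 ^ n := by simp [Finset.card_univ]
  omega

lemma cardA (n m : ℕ) : Nat.card {a : Finset (Fin n) // a.card ≤ m} ≤ (n+1)^m := by
  classical
  have hinj : Function.Injective
      (fun a : {a : Finset (Fin n) // a.card ≤ m} =>
        (fun i : Fin m => (a.1.sort (· ≤ ·))[i.1]?)) := by
    intro a b h
    have hlen : (a.1.sort (· ≤ ·)).length ≤ m := by
      rw [Finset.length_sort]; exact a.2
    have hlen' : (b.1.sort (· ≤ ·)).length ≤ m := by
      rw [Finset.length_sort]; exact b.2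
    have hl : a.1.sort (· ≤ ·) = b.1.sort (· ≤ ·) := by
      apply List.ext_getElem?
      intro i
      by_cases hi : i < m
      · exact congrFun h ⟨i, hi⟩
      · rw [List.getElem?_eq_none (by omega), List.getElem?_eq_none (by omega)]
    apply Subtype.ext
    rw [← Finset.sort_toFinset (r := (· ≤ ·)) (s := a.1), ← Finset.sort_toFinset (r := (· ≤ ·)) (s := b.1), hl]
  calc Nat.card {a : Finset (Fin n) // a.card ≤ m}
      ≤ Nat.card (Fin m → Option (Fin n)) := Nat.card_le_card_of_injective _ hinj
    _ = (n+1)^m := by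
        rw [Nat.card_fun]
        simp [Nat.card_eq_fintype_card]

lemma mainCount (n m K : ℕ) :
    Nat.card {rr : Fin K → Finset (Fin n) // ∃ a b : Finset (Fin n), a ≠ b ∧
      a.card ≤ m ∧ b.card ≤ m ∧ ∀ t, jac a (rr t) = jac b (rr t)} * 2 ^ K
      ≤ (n+1)^(2*m) * 2^(n*K) := by
  classical
  set I := {p : Finset (Fin n) × Finset (Fin n) //
    p.1 ≠ p.2 ∧ p.1.card ≤ m ∧ p.2.card ≤ m} with hI
  set bad := {rr : Fin K → Finset (Fin n) // ∃ a b : Finset (Fin n), a ≠ b ∧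
      a.card ≤ m ∧ b.card ≤ m ∧ ∀ t, jac a (rr t) = jac b (rr t)} with hbad
  set C : I → Finset (Finset (Fin n)) :=
    fun p => Finset.univ.filter (fun r => jac p.1.1 r = jac p.1.2 r) with hCdef
  have hw : ∀ rr : bad, ∃ p : I, ∀ t, rr.1 t ∈ C p := by
    rintro ⟨rr, a, b, hab, ha, hb, h⟩
    exact ⟨⟨(a, b), hab, ha, hb⟩, fun t => Finset.mem_filter.mpr ⟨Finset.mem_univ _, h t⟩⟩
  choose w hwspec using hw
  set T := Σ p : I, (Fin K → {r // r ∈ C p}) with hT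
  set Φ : bad → T := fun rr => ⟨w rr, fun t => ⟨rr.1 t, hwspec rr t⟩⟩ with hΦ
  have hΦinj : Function.Injective Φ := by
    intro u v h
    apply Subtype.ext
    funext t
    have : ∀ rr : bad, ((Φ rr).2 t).1 = rr.1 t := fun _ => rfl
    rw [← this u, ← this v, h]
  have step1 : Nat.card bad ≤ Nat.card T := Nat.card_le_card_of_injective Φ hΦinj
  have step2 : Nat.card T = ∑ p : I, (C p).card ^ K := by
    rw [Nat.card_eq_fintype_card, Fintype.card_sigma]
    congr 1
    funext p
    rw [← Nat.card_eq_fintype_card, Nat.card_fun, Nat.card_eq_finsetCard,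
      Nat.card_eq_fintype_card, Fintype.card_fin]
  -- per-term bound
  have hterm : ∀ p : I, (C p).card * 2 ≤ 2 ^ n := by
    intro p
    obtain ⟨x, hx⟩ := keyA' p.2.1
    exact countC p.2.1 hx
  have step3 : (∑ p : I, (C p).card ^ K) * 2 ^ K ≤ Fintype.card I * 2 ^ (n * K) := by
    rw [Finset.sum_mul]
    calc ∑ p : I, (C p).card ^ K * 2 ^ K = ∑ p : I, ((C p).card * 2) ^ K := by
          simp [mul_pow]
      _ ≤ ∑ _p : I, 2 ^ (n * K) := by
          apply Finset.sum_le_sum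
          intro p _
          calc ((C p).card * 2) ^ K ≤ (2 ^ n) ^ K :=
                Nat.pow_le_pow_left (hterm p) K
            _ = 2 ^ (n * K) := by rw [← pow_mul]
      _ = Fintype.card I * 2 ^ (n * K) := by
          rw [Finset.sum_const, Finset.card_univ, smul_eq_mul]
  have step4 : Fintype.card I ≤ (n+1)^(2*m) := by
    have hinj : Function.Injective (fun p : I =>
        ((⟨p.1.1, p.2.2.1⟩ : {a : Finset (Fin n) // a.card ≤ m}),
         (⟨p.1.2, p.2.2.2⟩ : {a : Finset (Fin n) // a.card ≤ m}))) := by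
      intro p q h
      apply Subtype.ext
      have h1 := congrArg (fun z => z.1.1) h
      have h2 := congrArg (fun z => z.2.1) h
      exact Prod.ext h1 h2
    calc Fintype.card I = Nat.card I := (Nat.card_eq_fintype_card).symm
      _ ≤ Nat.card ({a : Finset (Fin n) // a.card ≤ m} × {a : Finset (Fin n) // a.card ≤ m}) :=
          Nat.card_le_card_of_injective _ hinj
      _ = Nat.card {a : Finset (Fin n) // a.card ≤ m} *
          Nat.card {a : Finset (Fin n) // a.card ≤ m} := Nat.card_prod _ _
      _ ≤ (n+1)^m * (n+1)^m := Nat.mul_le_mul (cardA n m) (cardA n m)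
      _ = (n+1)^(2*m) := by rw [← pow_add, two_mul]
  calc Nat.card bad * 2 ^ K ≤ Nat.card T * 2 ^ K := Nat.mul_le_mul_right _ step1
    _ = (∑ p : I, (C p).card ^ K) * 2 ^ K := by rw [step2]
    _ ≤ Fintype.card I * 2 ^ (n * K) := step3
    _ ≤ (n+1)^(2*m) * 2^(n*K) := Nat.mul_le_mul_right _ step4


open Filter Real

/-- If `0 < ε < 1` and `k n ≥ (4 + ε)√n` for large `n`, then with probability tending to `1`
the set `R = {r₁, r₁ᶜ, …, r_{k n}, r_{k n}ᶜ}` resolves all distinct pairs of subsets of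
`Fin n` of size at most `(1−ε)(ln π)√n / ln n`. -/
theorem stmt19 (ε : ℝ) (hε0 : 0 < ε) (hε1 : ε < 1) (k : ℕ → ℕ)
    (hk : ∀ᶠ n : ℕ in Filter.atTop, (4 + ε) * Real.sqrt (n : ℝ) ≤ (k n : ℝ)) :
    Filter.Tendsto (fun n : ℕ => (B19 ε k n : ℝ) / 2 ^ (n * k n))
      Filter.atTop (nhds 0) := by
  classical
  set M : ℕ → ℕ := fun n =>
    ⌊(1 - ε) * Real.log Real.pi * Real.sqrt (n : ℝ) / Real.log (n : ℝ)⌋₊ with hM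
  have hB : ∀ n, B19 ε k n * 2 ^ (k n) ≤ (n+1)^(2 * M n) * 2^(n * k n) := by
    intro n
    refine le_trans (Nat.mul_le_mul_right _ ?_) (mainCount n (M n) (k n))
    unfold B19
    refine Nat.card_le_card_of_injective (Subtype.impEmbedding _ _ ?_)
      (Subtype.impEmbedding _ _ _).injective
    rintro rr ⟨a, b, hab, ha, hb, h⟩
    exact ⟨a, b, hab, Nat.le_floor ha, Nat.le_floor hb, fun t => (h t).1⟩
  -- numeric facts
  have hπ : Real.log Real.pi ≤ 1.2 := by
    have h1 : Real.pi ≤ 3.15 := by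
      have := Real.pi_lt_d2
      linarith
    have h2 : Real.log Real.pi ≤ Real.log 3.15 := by
      apply Real.log_le_log (by positivity) h1
    have h3 : Real.log 3.15 ≤ 1.2 := by
      rw [Real.log_le_iff_le_exp (by norm_num)]
      have e1 : (2.7182818283:ℝ) < Real.exp 1 := Real.exp_one_gt_d9
      have e2 : (1.2:ℝ) ≤ Real.exp 0.2 := by nlinarith [Real.add_one_le_exp (0.2:ℝ)]
      calc (3.15:ℝ) ≤ 2.7182818283 * 1.2 := by norm_num
        _ ≤ Real.exp 1 * Real.exp 0.2 := by nlinarith [Real.exp_pos (1:ℝ)]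
        _ = Real.exp 1.2 := by rw [← Real.exp_add]; norm_num
    linarith
  -- the dominating sequence
  have hs : Tendsto (fun n : ℕ => Real.sqrt n) atTop atTop := by
    have h := (tendsto_rpow_atTop (by norm_num : (0:ℝ) < 1/2)).comp
      tendsto_natCast_atTop_atTop
    refine h.congr fun n => ?_
    rw [Function.comp_apply, ← Real.sqrt_eq_rpow]
  have hg : Tendsto (fun n : ℕ => Real.exp (-(Real.sqrt n * (1/4)))) atTop (nhds 0) :=
    Real.tendsto_exp_atBot.comp
      (tendsto_neg_atBot_iff.mpr (hs.atTop_mul_const (by norm_num : (0:ℝ) < 1/4)))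
  have hlog : Tendsto (fun n : ℕ => Real.log n) atTop atTop :=
    Real.tendsto_log_atTop.comp tendsto_natCast_atTop_atTop
  apply squeeze_zero' (Eventually.of_forall (fun n => by positivity))
    ?_ hg
  filter_upwards [hk, hlog.eventually_ge_atTop 20, eventually_ge_atTop 1]
    with n hkn hln hn1
  have hn1' : (1:ℝ) ≤ (n:ℝ) := by exact_mod_cast hn1
  have hlogn_pos : (0:ℝ) < Real.log n := by linarith
  have hsq : (0:ℝ) ≤ Real.sqrt n := Real.sqrt_nonneg _
  -- step 1 : B19/2^{nk} ≤ (n+1)^{2M}/2^k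
  have step1 : (B19 ε k n : ℝ) / 2 ^ (n * k n) ≤ ((n:ℝ)+1)^(2 * M n) / 2^(k n) := by
    rw [div_le_div_iff₀ (by positivity) (by positivity)]
    have := hB n
    have hcast : ((B19 ε k n * 2 ^ (k n) : ℕ) : ℝ) ≤ (((n+1)^(2 * M n) * 2^(n * k n) : ℕ) : ℝ) := by
      exact_mod_cast this
    push_cast at hcast
    linarith
  refine le_trans step1 ?_
  -- step 2: log bound
  have hfpos : (0:ℝ) < ((n:ℝ)+1)^(2 * M n) / 2^(k n) := by positivity
  rw [← Real.exp_log hfpos]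
  apply Real.exp_le_exp.mpr
  rw [Real.log_div (by positivity) (by positivity), Real.log_pow, Real.log_pow]
  -- bounds
  have hMle : (M n : ℝ) ≤ 1.2 * Real.sqrt n / Real.log n := by
    have h0 : (0:ℝ) ≤ (1 - ε) * Real.log Real.pi * Real.sqrt (n:ℝ) / Real.log (n:ℝ) := by
      apply div_nonneg _ hlogn_pos.le
      apply mul_nonneg (mul_nonneg (by linarith) _) hsq
      exact Real.log_nonneg (by linarith [Real.pi_gt_three])
    refine le_trans (Nat.floor_le h0) ?_
    gcongr
    have hl0 : (0:ℝ) ≤ Real.log Real.pi := Real.log_nonneg (by linarith [Real.pi_gt_three])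
    nlinarith [hsq]
  have hlog1 : Real.log ((n:ℝ)+1) ≤ Real.log n + 1 := by
    have h2n : ((n:ℝ)+1) ≤ 2*n := by linarith
    calc Real.log ((n:ℝ)+1) ≤ Real.log (2*n) := Real.log_le_log (by positivity) h2n
      _ = Real.log 2 + Real.log n := Real.log_mul (by norm_num) (by linarith)
      _ ≤ Real.log n + 1 := by linarith [Real.log_two_lt_d9]
  have hlog1pos : (0:ℝ) ≤ Real.log ((n:ℝ)+1) := Real.log_nonneg (by linarith)
  have key1 : (M n : ℝ) * Real.log ((n:ℝ)+1) ≤ 1.26 * Real.sqrt n := by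
    have step : (M n : ℝ) * Real.log ((n:ℝ)+1) ≤
        (1.2 * Real.sqrt n / Real.log n) * (Real.log n + 1) := by
      apply mul_le_mul hMle hlog1 hlog1pos
      positivity
    have expand : (1.2 * Real.sqrt n / Real.log n) * (Real.log n + 1)
        = 1.2 * Real.sqrt n + 1.2 * Real.sqrt n / Real.log n := by
      field_simp
    have tail : 1.2 * Real.sqrt n / Real.log n ≤ 0.06 * Real.sqrt n := by
      rw [div_le_iff₀ hlogn_pos]
      nlinarith [hsq]
    linarith
  have key2 : 2.772 * Real.sqrt n ≤ (k n : ℝ) * Real.log 2 := by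
    have hk4 : 4 * Real.sqrt n ≤ (k n : ℝ) := by nlinarith [hkn, hsq]
    have hl2 : (0.6931:ℝ) ≤ Real.log 2 := by linarith [Real.log_two_gt_d9]
    nlinarith [hsq]
  push_cast
  nlinarith [key1, key2, hsq]
end
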